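/- arXiv:1510.07744 — 7 statements merged into one kernel-verified Lean document; each statement's English description precedes it below -/
import Mathlib

section
/- Let H be a symmetric digraph (every arc lies in a digon) whose largest strong clique has m vertices. Then a transitive digraph G admits a homomorphism to H if and only if the underlying graph of G admits a homomorphism to the complete graph K_m, and consequently every transitive digraph that is a minimal H-obstruction has exactly m+1 vertices. -/
universe u

/-- `S` is a strong clique for the arc relation `A`. -/
def StrongClique {V : Type*} (A : V → V → Prop) (S : Set V) : Prop :=
  ∀ ⦃u⦄, u ∈ S → ∀ ⦃v⦄, v ∈ S → u ≠ v → A u v ∧ A v u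

/-- The induced subgraph on `S` admits a homomorphism to the digraph `B`. -/
def HomOn {VG VH : Type*} (A : VG → VG → Prop) (B : VH → VH → Prop) (S : Set VG) : Prop :=
  ∃ f : VG → VH, ∀ u ∈ S, ∀ v ∈ S, A u v → B (f u) (f v)

section Aux

variable {VG : Type u} {VH : Type*}

/-- A homomorphism on `S` bounds the length of pairwise-`A` lists inside `S`. -/
lemma aux_len_le (B : VH → VH → Prop) (hirrH : ∀ v, ¬ B v v)
    (hsymm : ∀ u v : VH, B u v → B v u) (m : ℕ)
    (hmax : ∀ S : Finset VH, StrongClique B ↑S → S.card ≤ m)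
    (A : VG → VG → Prop) (S : Set VG) (f : VG → VH)
    (hf : ∀ u ∈ S, ∀ v ∈ S, A u v → B (f u) (f v))
    (l : List VG) (hlS : ∀ x ∈ l, x ∈ S) (hl : l.Pairwise A) :
    l.length ≤ m := by
  classical
  have hp0 : l.Pairwise (fun a b => B (f a) (f b) ∧ B (f b) (f a)) := by
    refine List.Pairwise.imp_of_mem ?_ hl
    intro a b ha hb hab
    have h1 := hf a (hlS a ha) b (hlS b hb) hab
    exact ⟨h1, hsymm _ _ h1⟩
  have hp : (l.map f).Pairwise (fun a b => B a b ∧ B b a) :=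
    List.Pairwise.map f (fun a b h => h) hp0
  have hnd : (l.map f).Nodup := by
    refine hp.imp ?_
    rintro a b ⟨h1, -⟩ rfl
    exact hirrH a h1
  have hclique : StrongClique B ↑(l.map f).toFinset := by
    intro u hu v hv huv
    rw [Finset.mem_coe, List.mem_toFinset] at hu hv
    exact (haveI : Std.Symm (fun a b : VH => B a b ∧ B b a) := ⟨fun a b h => ⟨h.2, h.1⟩⟩; hp.forall hu hv huv)
  have := hmax _ hclique
  rwa [List.toFinset_card_of_nodup hnd, List.length_map] at this

/-- From a transitive loopless digraph, extract a strict partial order whose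
comparability covers all arcs. -/
lemma aux_order (A : VG → VG → Prop) (hirr : ∀ v, ¬ A v v)
    (htr : ∀ u v w : VG, u ≠ v → v ≠ w → u ≠ w → A u v → A v w → A u w) :
    ∃ P : VG → VG → Prop, Transitive P ∧ Irreflexive P ∧
      (∀ x y, P x y → A x y) ∧ (∀ x y, A x y → P x y ∨ P y x) := by
  classical
  let W : VG → VG → Prop := WellOrderingRel
  have hWtr : Transitive W := fun a b c => IsTrans.trans a b c
  have hWirr : Irreflexive W := fun a => Std.Irrefl.irrefl a
  refine ⟨fun x y => A x y ∧ (¬ A y x ∨ W x y), ?_, ?_, ?_, ?_⟩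
  · rintro u v w ⟨huv, h1⟩ ⟨hvw, h2⟩
    have hune : u ≠ v := fun h => hirr v (h ▸ huv)
    have hvne : v ≠ w := fun h => hirr w (h ▸ hvw)
    have hownu : u ≠ w := by
      rintro rfl
      have hWuv : W u v := h1.resolve_left (fun h => h hvw)
      have hWvu : W v u := h2.resolve_left (fun h => h huv)
      exact hWirr u (hWtr hWuv hWvu)
    have huw : A u w := htr u v w hune hvne hownu huv hvw
    refine ⟨huw, ?_⟩
    by_cases hwu : A w u
    · right
      have hvu : A v u := htr v w u hvne (Ne.symm hownu) (Ne.symm hune) hvw hwu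
      have hwv : A w v := htr w u v (Ne.symm hownu) hune (Ne.symm hvne) hwu huv
      exact hWtr (h1.resolve_left (fun h => h hvu)) (h2.resolve_left (fun h => h hwv))
    · exact Or.inl hwu
  · intro x hx
    exact hirr x hx.1
  · exact fun x y h => h.1
  · intro x y hxy
    by_cases hyx : A y x
    · rcases trichotomous_of W x y with h | h | h
      · exact Or.inl ⟨hxy, Or.inr h⟩
      · exact absurd (h ▸ hxy) (hirr y)
      · exact Or.inr ⟨hyx, Or.inr h⟩
    · exact Or.inl ⟨hxy, Or.inl hyx⟩

/-- Mirsky coloring: if all chains of a strict order have length at most `m`,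
then there is a strictly monotone `Fin m`-valued grading. -/
lemma aux_mirsky (P : VG → VG → Prop) (htr : Transitive P) (_ : Irreflexive P) (m : ℕ)
    (hbound : ∀ l : List VG, l.Pairwise P → l.length ≤ m) :
    ∃ c : VG → Fin m, ∀ u v : VG, P u v → (c u : ℕ) < (c v : ℕ) := by
  classical
  set Q : VG → ℕ → Prop := fun v k => ∃ l : List VG, (l ++ [v]).Pairwise P ∧ l.length + 1 = k
    with hQ
  have hQ1 : ∀ v, Q v 1 := fun v => ⟨[], by simp, rfl⟩
  have h1m : ∀ v : VG, 1 ≤ m := fun v => by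
    have := hbound [v] (by simp)
    simpa using this
  set c' : VG → ℕ := fun v => Nat.findGreatest (Q v) m with hc'
  have hge1 : ∀ v, 1 ≤ c' v := fun v => Nat.le_findGreatest (h1m v) (hQ1 v)
  have hle : ∀ v, c' v ≤ m := fun v => Nat.findGreatest_le m
  have hspec : ∀ v, Q v (c' v) := fun v => Nat.findGreatest_spec (h1m v) (hQ1 v)
  have hmono : ∀ u v, P u v → c' u < c' v := by
    intro u v huv
    obtain ⟨l, hlp, hlen⟩ := hspec u
    have hpw : ((l ++ [u]) ++ [v]).Pairwise P := by
      rw [List.pairwise_append]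
      refine ⟨hlp, by simp, ?_⟩
      intro a ha b hb
      simp only [List.mem_singleton] at hb
      subst hb
      rcases List.mem_append.mp ha with h | h
      · have hau : P a u := by
          rw [List.pairwise_append] at hlp
          exact hlp.2.2 a h u (by simp)
        exact htr hau huv
      · simp only [List.mem_singleton] at h
        exact h ▸ huv
    have hQv : Q v (c' u + 1) := ⟨l ++ [u], hpw, by simp [← hlen]⟩
    have hlem : c' u + 1 ≤ m := by
      have := hbound _ hpw
      simp only [List.length_append, List.length_singleton] at this
      omega
    exact lt_of_lt_of_le (Nat.lt_succ_self _) (Nat.le_findGreatest hlem hQv)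
  refine ⟨fun v => ⟨c' v - 1, by have := hge1 v; have := hle v; omega⟩, ?_⟩
  intro u v huv
  have := hmono u v huv
  have := hge1 u
  simp only []
  omega

end Aux

theorem stmt_3 {VH : Type*} (B : VH → VH → Prop)
    (hirrH : ∀ v, ¬ B v v)
    (hsymm : ∀ u v : VH, B u v → B v u)
    (m : ℕ)
    (hex : ∃ S : Finset VH, S.card = m ∧ StrongClique B ↑S)
    (hmax : ∀ S : Finset VH, StrongClique B ↑S → S.card ≤ m) :
    (∀ (VG : Type u) (A : VG → VG → Prop),
        (∀ v, ¬ A v v) →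
        (∀ u v w : VG, u ≠ v → v ≠ w → u ≠ w → A u v → A v w → A u w) →
        ((∃ f : VG → VH, ∀ u v : VG, A u v → B (f u) (f v)) ↔
          (∃ c : VG → Fin m, ∀ u v : VG, A u v ∨ A v u → c u ≠ c v))) ∧
    (∀ (VG : Type u) [Fintype VG] (A : VG → VG → Prop),
        (∀ v, ¬ A v v) →
        (∀ u v w : VG, u ≠ v → v ≠ w → u ≠ w → A u v → A v w → A u w) →
        ¬ HomOn A B Set.univ →
        (∀ x : VG, HomOn A B {x}ᶜ) →
        Fintype.card VG = m + 1) := by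
  classical
  obtain ⟨S₀, hS₀card, hS₀cl⟩ := hex
  -- coloring ⇒ hom
  have hcol_hom : ∀ (VG : Type u) (A : VG → VG → Prop),
      (∃ c : VG → Fin m, ∀ u v : VG, A u v ∨ A v u → c u ≠ c v) →
      ∃ f : VG → VH, ∀ u v : VG, A u v → B (f u) (f v) := by
    rintro VG A ⟨c, hc⟩
    set e : Fin m → {x // x ∈ S₀} := fun i => S₀.equivFin.symm (Fin.cast hS₀card.symm i) with he
    have heinj : Function.Injective e := by
      intro i j h
      have h2 := S₀.equivFin.symm.injective h
      exact Fin.cast_injective _ h2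

    refine ⟨fun v => (e (c v) : VH), ?_⟩
    intro u v huv
    have hne : c u ≠ c v := hc u v (Or.inl huv)
    have hne' : (e (c u) : VH) ≠ (e (c v) : VH) := fun h => hne (heinj (Subtype.ext h))
    exact (hS₀cl (Finset.mem_coe.mpr (e (c u)).2) (Finset.mem_coe.mpr (e (c v)).2) hne').1
  -- hom ⇒ coloring
  have hhom_col : ∀ (VG : Type u) (A : VG → VG → Prop),
      (∀ v, ¬ A v v) →
      (∀ u v w : VG, u ≠ v → v ≠ w → u ≠ w → A u v → A v w → A u w) →
      (∃ f : VG → VH, ∀ u v : VG, A u v → B (f u) (f v)) →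
      ∃ c : VG → Fin m, ∀ u v : VG, A u v ∨ A v u → c u ≠ c v := by
    rintro VG A hirr htr ⟨f, hf⟩
    obtain ⟨P, hPtr, hPirr, hPA, hAP⟩ := aux_order A hirr htr
    have hbound : ∀ l : List VG, l.Pairwise P → l.length ≤ m := by
      intro l hl
      exact aux_len_le B hirrH hsymm m hmax A Set.univ f
        (fun u _ v _ h => hf u v h) l (fun x _ => trivial) (hl.imp (fun h => hPA _ _ h))
    obtain ⟨c, hc⟩ := aux_mirsky P hPtr hPirr m hbound
    refine ⟨c, ?_⟩
    intro u v huv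
    have hor : P u v ∨ P v u := by
      rcases huv with h | h
      · exact hAP u v h
      · exact (hAP v u h).symm
    rcases hor with h | h
    · exact Fin.ne_of_val_ne (Nat.ne_of_lt (hc u v h))
    · exact (Fin.ne_of_val_ne (Nat.ne_of_lt (hc v u h))).symm
  constructor
  · intro VG A hirr htr
    exact ⟨fun h => hhom_col VG A hirr htr h, fun h => hcol_hom VG A h⟩
  · intro VG _ A hirr htr hnot hdel
    obtain ⟨P, hPtr, hPirr, hPA, hAP⟩ := aux_order A hirr htr
    have hexl : ∃ l : List VG, l.Pairwise P ∧ l.length = m + 1 := by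
      by_contra hno
      push_neg at hno
      have hbound : ∀ l : List VG, l.Pairwise P → l.length ≤ m := by
        intro l hl
        by_contra hlen
        push_neg at hlen
        have hsub : (l.take (m + 1)).Pairwise P := hl.sublist (List.take_sublist _ _)
        have hlt : (l.take (m + 1)).length = m + 1 := by
          rw [List.length_take]; omega
        exact hno _ hsub hlt
      obtain ⟨c, hc⟩ := aux_mirsky P hPtr hPirr m hbound
      have hcol : ∃ c : VG → Fin m, ∀ u v : VG, A u v ∨ A v u → c u ≠ c v := by
        refine ⟨c, ?_⟩
        intro u v huv
        have hor : P u v ∨ P v u := by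
          rcases huv with h | h
          · exact hAP u v h
          · exact (hAP v u h).symm
        rcases hor with h | h
        · exact Fin.ne_of_val_ne (Nat.ne_of_lt (hc u v h))
        · exact (Fin.ne_of_val_ne (Nat.ne_of_lt (hc v u h))).symm
      obtain ⟨f, hf⟩ := hcol_hom VG A hcol
      exact hnot ⟨f, fun u _ v _ h => hf u v h⟩
    obtain ⟨l, hlP, hlen⟩ := hexl
    have hnd : l.Nodup := by
      refine hlP.imp ?_
      intro a b h he
      subst he
      exact hPirr a h
    have hall : ∀ x : VG, x ∈ l := by
      intro x
      by_contra hx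
      obtain ⟨f, hf⟩ := hdel x
      have hmem : ∀ y ∈ l, y ∈ ({x}ᶜ : Set VG) := by
        intro y hy
        rw [Set.mem_compl_singleton_iff]
        exact fun h => hx (h ▸ hy)
      have := aux_len_le B hirrH hsymm m hmax A ({x}ᶜ) f hf l hmem
        (hlP.imp (fun h => hPA _ _ h))
      omega
    have huniv : l.toFinset = Finset.univ :=
      Finset.eq_univ_iff_forall.mpr fun x => List.mem_toFinset.mpr (hall x)
    calc Fintype.card VG = Finset.univ.card := Finset.card_univ.symm
      _ = l.toFinset.card := by rw [huniv]
      _ = l.length := List.toFinset_card_of_nodup hnd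
      _ = m + 1 := hlen
end

section
/- The underlying undirected graph of a transitive digraph G is a perfect graph; in particular, its chromatic number equals its clique number. -/
theorem key_comp {V : Type*} [Fintype V] (A : V → V → Prop)
    (hirr : ∀ v, ¬ A v v)
    (htrans : ∀ u v w : V, u ≠ v → v ≠ w → u ≠ w → A u v → A v w → A u w)
    (G : SimpleGraph V) (hG : ∀ u v, G.Adj u v ↔ (A u v ∨ A v u)) :
    G.chromaticNumber = (G.cliqueNum : ℕ∞) := by
  classical
  -- trivial facts
  have hne : ∀ {u v}, A u v → u ≠ v := fun {u v} h huv => hirr v (huv ▸ h)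
  set f : V → ℕ := fun v => (Fintype.equivFin V v : ℕ) with hf
  have hfinj : Function.Injective f := fun a b h =>
    (Fintype.equivFin V).injective (Fin.val_injective h)
  set B : V → V → Prop := fun u v =>
    (A u v ∧ ¬ A v u) ∨ (A u v ∧ A v u ∧ f u < f v) with hB
  have hBirr : ∀ v, ¬ B v v := by
    rintro v (⟨h, _⟩ | ⟨h, _, _⟩) <;> exact hirr v h
  have hBasym : ∀ u v, B u v → ¬ B v u := by
    rintro u v (⟨h1, h2⟩ | ⟨h1, h2, h3⟩) (⟨g1, g2⟩ | ⟨g1, g2, g3⟩)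
    · exact h2 g1
    · exact h2 g1
    · exact g2 h1
    · exact lt_asymm h3 g3
  have hBtrans : ∀ u v w, B u v → B v w → B u w := by
    intro u v w huv hvw
    have huv' : A u v := huv.elim And.left And.left
    have hvw' : A v w := hvw.elim And.left And.left
    have h1 : u ≠ v := hne huv'
    have h2 : v ≠ w := hne hvw'
    have h3 : u ≠ w := by
      rintro rfl; exact hBasym u v huv hvw
    have hAuw : A u w := htrans u v w h1 h2 h3 huv' hvw'
    rcases huv with ⟨_, hnvu⟩ | ⟨_, hvu, hlt1⟩
    · -- ¬ A v u
      have hnwu : ¬ A w u := by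
        intro hwu
        rcases hvw with ⟨_, hnwv⟩ | ⟨_, hwv, _⟩
        · exact hnwv (htrans w u v h3.symm h1 h2.symm hwu huv')
        · exact hnvu (htrans v w u h2 h3.symm h1.symm hvw' hwu)
      exact Or.inl ⟨hAuw, hnwu⟩
    · rcases hvw with ⟨_, hnwv⟩ | ⟨_, hwv, hlt2⟩
      · have hnwu : ¬ A w u := fun hwu =>
          hnwv (htrans w u v h3.symm h1 h2.symm hwu huv')
        exact Or.inl ⟨hAuw, hnwu⟩
      · by_cases hwu : A w u
        · exact Or.inr ⟨hAuw, hwu, hlt1.trans hlt2⟩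
        · exact Or.inl ⟨hAuw, hwu⟩
  have hBadj : ∀ u v, G.Adj u v ↔ (B u v ∨ B v u) := by
    intro u v
    rw [hG]
    constructor
    · intro h
      have huv : u ≠ v := by
        rintro rfl; exact h.elim (hirr _) (hirr _)
      rcases h with h | h
      · by_cases h' : A v u
        · rcases (hfinj.ne huv).lt_or_gt with hl | hl
          · exact Or.inl (Or.inr ⟨h, h', hl⟩)
          · exact Or.inr (Or.inr ⟨h', h, hl⟩)
        · exact Or.inl (Or.inl ⟨h, h'⟩)
      · by_cases h' : A u v
        · rcases (hfinj.ne huv).lt_or_gt with hl | hl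
          · exact Or.inl (Or.inr ⟨h', h, hl⟩)
          · exact Or.inr (Or.inr ⟨h, h', hl⟩)
        · exact Or.inr (Or.inl ⟨h, h'⟩)
    · rintro (h | h)
      · exact Or.inl (h.elim And.left And.left)
      · exact Or.inr (h.elim And.left And.left)
  -- partial order structure
  letI P : Preorder V :=
    { le := fun u v => B u v ∨ u = v
      lt := B
      le_refl := fun v => Or.inr rfl
      le_trans := by
        rintro a b c (hab | rfl) (hbc | rfl)
        · exact Or.inl (hBtrans a b c hab hbc)
        · exact Or.inl hab
        · exact Or.inl hbc
        · exact Or.inr rfl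
      lt_iff_le_not_ge := by
        intro a b
        constructor
        · intro h
          refine ⟨Or.inl h, ?_⟩
          rintro (h' | rfl)
          · exact hBasym a b h h'
          · exact hBirr _ h
        · rintro ⟨hab | rfl, h⟩
          · exact hab
          · exact absurd (Or.inr rfl) h }
  have hlt : ∀ u v : V, u < v ↔ B u v := fun _ _ => Iff.rfl
  have hfin : ∀ v : V, Order.height v < ⊤ := by
    intro v
    refine lt_of_le_of_lt (Order.height_le fun p _ => ?_)
      (WithTop.coe_lt_top (Fintype.card V))
    exact Nat.cast_le.mpr p.length_lt_card.le
  -- each height's chain gives a clique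
  have hub : ∀ v : V, (Order.height v).toNat + 1 ≤ G.cliqueNum := by
    intro v
    set n := (Order.height v).toNat with hn
    have hh : Order.height v = (n : ℕ∞) := (ENat.coe_toNat (hfin v).ne).symm
    obtain ⟨p, hlast, hlen⟩ := Order.exists_series_of_height_eq_coe v hh
    have hpinj : Function.Injective p := p.strictMono.injective
    have hclique : G.IsClique (Finset.univ.image p) := by
      intro x hx y hy hxy
      simp only [Finset.coe_image, Set.mem_image] at hx hy
      obtain ⟨i, _, rfl⟩ := hx
      obtain ⟨j, _, rfl⟩ := hy
      have hij : i ≠ j := fun h => hxy (by rw [h])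
      rcases hij.lt_or_gt with h | h
      · exact (hBadj _ _).2 (Or.inl (p.strictMono h))
      · exact (hBadj _ _).2 (Or.inr (p.strictMono h))
    have hcard : (Finset.univ.image p).card = n + 1 := by
      rw [Finset.card_image_of_injective _ hpinj, Finset.card_univ,
        Fintype.card_fin, hlen]
    calc n + 1 = (Finset.univ.image p).card := hcard.symm
      _ ≤ G.cliqueNum := hclique.card_le_cliqueNum
  refine le_antisymm ?_ ?_
  · -- χ ≤ ω : color by height
    have C : G.Coloring (Fin G.cliqueNum) := by
      refine SimpleGraph.Coloring.mk
        (fun v => ⟨(Order.height v).toNat, lt_of_lt_of_le (Nat.lt_succ_self _) (hub v)⟩) ?_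
      intro u v hadj
      have hd : (Order.height u).toNat ≠ (Order.height v).toNat := by
        rcases (hBadj u v).1 hadj with h | h
        · have h2 := Order.height_strictMono ((hlt u v).2 h) (hfin u)
          rw [← ENat.coe_toNat (hfin u).ne, ← ENat.coe_toNat (hfin v).ne] at h2
          exact (Nat.cast_lt.mp h2).ne
        · have h2 := Order.height_strictMono ((hlt v u).2 h) (hfin v)
          rw [← ENat.coe_toNat (hfin v).ne, ← ENat.coe_toNat (hfin u).ne] at h2
          exact (Nat.cast_lt.mp h2).ne.symm
      exact fun h => hd (congrArg Fin.val h)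
    exact SimpleGraph.Colorable.chromaticNumber_le ⟨C⟩
  · -- ω ≤ χ
    obtain ⟨s, hs⟩ := G.exists_isNClique_cliqueNum
    calc (G.cliqueNum : ℕ∞) = (s.card : ℕ∞) := by rw [hs.card_eq]
      _ ≤ G.chromaticNumber := hs.isClique.card_le_chromaticNumber

theorem stmt_4 {V : Type*} [Fintype V] (A : V → V → Prop)
    (hirr : ∀ v, ¬ A v v)
    (htrans : ∀ u v w : V, u ≠ v → v ≠ w → u ≠ w → A u v → A v w → A u w) :
    (∀ S : Set V,
      ((SimpleGraph.mk (fun u v => A u v ∨ A v u)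
          ⟨fun u v h => h.symm.imp id id⟩
          ⟨fun v h => h.elim (hirr v) (hirr v)⟩).induce S).chromaticNumber =
      (((SimpleGraph.mk (fun u v => A u v ∨ A v u)
          ⟨fun u v h => h.symm.imp id id⟩
          ⟨fun v h => h.elim (hirr v) (hirr v)⟩).induce S).cliqueNum : ℕ∞)) ∧
    (SimpleGraph.mk (fun u v => A u v ∨ A v u)
        ⟨fun u v h => h.symm.imp id id⟩
        ⟨fun v h => h.elim (hirr v) (hirr v)⟩).chromaticNumber =
      ((SimpleGraph.mk (fun u v => A u v ∨ A v u)
        ⟨fun u v h => h.symm.imp id id⟩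
        ⟨fun v h => h.elim (hirr v) (hirr v)⟩).cliqueNum : ℕ∞) := by
  
  constructor
  · intro S
    haveI : Fintype ↥S := Fintype.ofFinite ↥S
    exact key_comp (fun u v : S => A ↑u ↑v) (fun v => hirr ↑v)
      (fun u v w h1 h2 h3 => htrans ↑u ↑v ↑w (fun h => h1 (Subtype.ext h))
        (fun h => h2 (Subtype.ext h)) (fun h => h3 (Subtype.ext h)))
      _ (fun u v => Iff.rfl)
  · exact key_comp A hirr htrans _ (fun u v => Iff.rfl)
end

section
/- Let M be an m×m matrix with all diagonal entries equal to 1 (so in an M-partition each part must be a strong clique). Then every transitive digraph that is a minimal M-obstruction is acyclic and has at most m+1 vertices. -/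
/-- An `M`-partition of the subdigraph of `(V, A)` induced on `S`.  The matrix
entries are encoded by `Option Bool`: `some true` is `1`, `some false` is `0`,
and `none` is `*`. -/
def MPartitionOn {V : Type*} {m : ℕ} (A : V → V → Prop)
    (M : Fin m → Fin m → Option Bool) (S : Set V) : Prop :=
  ∃ f : V → Fin m,
    (∀ i : Fin m, M i i = some true →
      ∀ u ∈ S, ∀ v ∈ S, f u = i → f v = i → u ≠ v → A u v ∧ A v u) ∧
    (∀ i : Fin m, M i i = some false →
      ∀ u ∈ S, ∀ v ∈ S, f u = i → f v = i → ¬ A u v) ∧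
    (∀ i j : Fin m, i ≠ j → M i j = some true →
      ∀ u ∈ S, ∀ v ∈ S, f u = i → f v = j → A u v) ∧
    (∀ i j : Fin m, i ≠ j → M i j = some false →
      ∀ u ∈ S, ∀ v ∈ S, f u = i → f v = j → ¬ A u v)

theorem stmt_6 {V : Type*} [Fintype V] {m : ℕ}
    (M : Fin m → Fin m → Option Bool)
    (hdiag : ∀ i : Fin m, M i i = some true)
    (A : V → V → Prop)
    (hirr : ∀ v, ¬ A v v)
    (htrans : ∀ u v w : V, u ≠ v → v ≠ w → u ≠ w → A u v → A v w → A u w)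
    (hobs : ¬ MPartitionOn A M Set.univ)
    (hmin : ∀ x : V, MPartitionOn A M {x}ᶜ) :
    (∀ v : V, ¬ Relation.TransGen A v v) ∧ Fintype.card V ≤ m + 1 := by
  -- No digons: otherwise u and v are twins and we can extend a partition of {u}ᶜ.
  have nodig : ∀ u v : V, u ≠ v → A u v → A v u → False := by
    intro u v hne huv hvu
    obtain ⟨f, h1, h2, h3, h4⟩ := hmin u
    have hvS : v ∈ ({u}ᶜ : Set V) := Set.mem_compl_singleton_iff.mpr hne.symm
    have tw1 : ∀ w, w ≠ u → w ≠ v → A v w → A u w := fun w hwu hwv h =>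
      htrans u v w hne (Ne.symm hwv) (Ne.symm hwu) huv h
    have tw1' : ∀ w, w ≠ u → w ≠ v → A u w → A v w := fun w hwu hwv h =>
      htrans v u w hne.symm (Ne.symm hwu) (Ne.symm hwv) hvu h
    have tw2 : ∀ w, w ≠ u → w ≠ v → A w v → A w u := fun w hwu hwv h =>
      htrans w v u hwv hne.symm hwu h hvu
    have tw2' : ∀ w, w ≠ u → w ≠ v → A w u → A w v := fun w hwu hwv h =>
      htrans w u v hwu hne hwv h huv
    apply hobs
    classical
    set g : V → Fin m := fun w => if w = u then f v else f w with hg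
    have hgu : g u = f v := if_pos rfl
    have hgw : ∀ w, w ≠ u → g w = f w := fun w h => if_neg h
    refine ⟨g, ?_, ?_, ?_, ?_⟩
    · intro i hi a _ b _ ha hb hab
      by_cases hau : a = u <;> by_cases hbu : b = u
      · exact absurd (hau.trans hbu.symm) hab
      · subst hau
        rw [hgu] at ha
        rw [hgw b hbu] at hb
        by_cases hbv : b = v
        · subst hbv; exact ⟨huv, hvu⟩
        · have h := h1 i hi v hvS b (Set.mem_compl_singleton_iff.mpr hbu) ha hb
            (Ne.symm hbv)
          exact ⟨tw1 b hbu hbv h.1, tw2 b hbu hbv h.2⟩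
      · subst hbu
        rw [hgw a hau] at ha
        rw [hgu] at hb
        by_cases hav : a = v
        · subst hav; exact ⟨hvu, huv⟩
        · have h := h1 i hi a (Set.mem_compl_singleton_iff.mpr hau) v hvS ha hb hav
          exact ⟨tw2 a hau hav h.1, tw1 a hau hav h.2⟩
      · rw [hgw a hau] at ha
        rw [hgw b hbu] at hb
        exact h1 i hi a (Set.mem_compl_singleton_iff.mpr hau) b
          (Set.mem_compl_singleton_iff.mpr hbu) ha hb hab
    · intro i hi
      rw [hdiag i] at hi
      simp at hi
    · intro i j hij hM a _ b _ ha hb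
      by_cases hau : a = u <;> by_cases hbu : b = u
      · subst hau
        rw [hgu] at ha
        rw [hbu, hgu] at hb
        exact absurd (ha.symm.trans hb) hij
      · subst hau
        rw [hgu] at ha
        rw [hgw b hbu] at hb
        by_cases hbv : b = v
        · subst hbv; exact absurd (ha.symm.trans hb) hij
        · exact tw1 b hbu hbv
            (h3 i j hij hM v hvS b (Set.mem_compl_singleton_iff.mpr hbu) ha hb)
      · subst hbu
        rw [hgw a hau] at ha
        rw [hgu] at hb
        by_cases hav : a = v
        · subst hav; exact absurd (ha.symm.trans hb) hij
        · exact tw2 a hau hav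
            (h3 i j hij hM a (Set.mem_compl_singleton_iff.mpr hau) v hvS ha hb)
      · rw [hgw a hau] at ha
        rw [hgw b hbu] at hb
        exact h3 i j hij hM a (Set.mem_compl_singleton_iff.mpr hau) b
          (Set.mem_compl_singleton_iff.mpr hbu) ha hb
    · intro i j hij hM a _ b _ ha hb hA
      by_cases hau : a = u <;> by_cases hbu : b = u
      · rw [hau, hgu] at ha
        rw [hbu, hgu] at hb
        exact hij (ha.symm.trans hb)
      · subst hau
        rw [hgu] at ha
        rw [hgw b hbu] at hb
        by_cases hbv : b = v
        · subst hbv; exact hij (ha.symm.trans hb)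
        · exact h4 i j hij hM v hvS b (Set.mem_compl_singleton_iff.mpr hbu) ha hb
            (tw1' b hbu hbv hA)
      · subst hbu
        rw [hgw a hau] at ha
        rw [hgu] at hb
        by_cases hav : a = v
        · subst hav; exact hij (ha.symm.trans hb)
        · exact h4 i j hij hM a (Set.mem_compl_singleton_iff.mpr hau) v hvS ha hb
            (tw2' a hau hav hA)
      · rw [hgw a hau] at ha
        rw [hgw b hbu] at hb
        exact h4 i j hij hM a (Set.mem_compl_singleton_iff.mpr hau) b
          (Set.mem_compl_singleton_iff.mpr hbu) ha hb hA
  have trans' : Transitive A := by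
    intro a b c hab hbc
    have hab' : a ≠ b := fun h => hirr a (h ▸ hab)
    have hbc' : b ≠ c := fun h => hirr b (h ▸ hbc)
    by_cases hac : a = c
    · exact absurd (hac ▸ hbc) fun h => nodig a b hab' hab h
    · exact htrans a b c hab' hbc' hac hab hbc
  constructor
  · intro v hv
    rw [@Relation.transGen_eq_self _ A ⟨trans'⟩] at hv
    exact hirr v hv
  · classical
    rcases isEmpty_or_nonempty V with h | hne
    · simp [Fintype.card_eq_zero]
    · obtain ⟨x⟩ := hne
      obtain ⟨f, h1, _, _, _⟩ := hmin x
      have hinj : Set.InjOn f ↑(Finset.univ.erase x) := by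
        intro a ha b hb hfab
        by_contra hab
        have hax : a ≠ x := by simpa using ha
        have hbx : b ≠ x := by simpa using hb
        have h := h1 (f a) (hdiag _) a (Set.mem_compl_singleton_iff.mpr hax) b
          (Set.mem_compl_singleton_iff.mpr hbx) rfl hfab.symm hab
        exact nodig a b hab h.1 h.2
      have hcard := Finset.card_le_card_of_injOn f
        (fun a _ => Finset.mem_univ (f a)) hinj
      rw [Finset.card_erase_of_mem (Finset.mem_univ x), Finset.card_univ,
        Finset.card_univ, Fintype.card_fin] at hcard
      omega
end

section
/- Every transitive digraph G that is a minimal obstruction to (k,0)-colouring (i.e., to partitioning V(G) into k independent sets) is a semi-complete transitive digraph on exactly k+1 vertices. -/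
/-- A `(k,0)`-colouring of the subdigraph induced on `S`: a partition of `S`
into `k` independent sets. -/
def K0ColouringOn {V : Type*} (A : V → V → Prop) (k : ℕ) (S : Set V) : Prop :=
  ∃ c : V → Fin k, ∀ u ∈ S, ∀ v ∈ S, c u = c v → ¬ A u v

theorem stmt_8 {V : Type*} [Fintype V] (A : V → V → Prop)
    (hirr : ∀ v, ¬ A v v)
    (htrans : ∀ u v w : V, u ≠ v → v ≠ w → u ≠ w → A u v → A v w → A u w)
    (k : ℕ)
    (hobs : ¬ K0ColouringOn A k Set.univ)
    (hmin : ∀ x : V, K0ColouringOn A k {x}ᶜ) :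
    (∀ u v : V, u ≠ v → A u v ∨ A v u) ∧ Fintype.card V = k + 1 := by
  classical
  -- dispatch k = 0
  rcases Nat.eq_zero_or_pos k with hk | hk
  · subst hk
    by_cases hV : Nonempty V
    · obtain ⟨v⟩ := hV
      obtain ⟨c, -⟩ := hmin v
      exact absurd rfl (Fin.elim0 (c v) : ¬ (0 = 0))
    · exact absurd ⟨fun v => (hV ⟨v⟩).elim, fun u _ => (hV ⟨u⟩).elim⟩ hobs
  -- the "order" refinement of A
  set e := Fintype.equivFin V with he
  set B : V → V → Prop := fun u v => A u v ∧ (¬ A v u ∨ e u < e v) with hB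
  have hBA : ∀ {u v}, B u v → A u v := fun h => h.1
  have hBne : ∀ {u v}, B u v → u ≠ v := by
    rintro u v h rfl; exact hirr u h.1
  have hBasym : ∀ {u v}, B u v → B v u → False := by
    rintro u v ⟨h1, h2⟩ ⟨h3, h4⟩
    have e1 : e u < e v := h2.resolve_left (not_not_intro h3)
    have e2 : e v < e u := h4.resolve_left (not_not_intro h1)
    exact absurd (e1.trans e2) (lt_irrefl _)
  have hBtrans : ∀ {u v w}, B u v → B v w → B u w := by
    intro u v w huv hvw
    have hne_uv : u ≠ v := hBne huv
    have hne_vw : v ≠ w := hBne hvw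
    have hne_uw : u ≠ w := by
      rintro rfl; exact hBasym huv hvw
    have hAuw : A u w := htrans u v w hne_uv hne_vw hne_uw huv.1 hvw.1
    refine ⟨hAuw, ?_⟩
    by_cases hwu : A w u
    · right
      have hAwv : A w v := htrans w u v hne_uw.symm hne_uv hne_vw.symm hwu huv.1
      have h1 : e v < e w := hvw.2.resolve_left (not_not_intro hAwv)
      have hAvu : A v u := htrans v w u hne_vw hne_uw.symm hne_uv.symm hvw.1 hwu
      have h2 : e u < e v := huv.2.resolve_left (not_not_intro hAvu)
      exact h2.trans h1
    · left; exact hwu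
  have hcomp : ∀ {u v}, u ≠ v → A u v → B u v ∨ B v u := by
    intro u v hne hA
    by_cases hvu : A v u
    · have : e u ≠ e v := fun h => hne (e.injective h)
      rcases this.lt_or_gt with h | h
      · exact Or.inl ⟨hA, Or.inr h⟩
      · exact Or.inr ⟨hvu, Or.inr h⟩
    · exact Or.inl ⟨hA, Or.inl hvu⟩
  -- height function: size of strict B-downset
  set h : V → ℕ := fun v => (Finset.univ.filter (fun u => B u v)).card with hh
  have hmono : ∀ {u v}, B u v → h u < h v := by
    intro u v huv
    apply Finset.card_lt_card
    rw [Finset.ssubset_iff_of_subset]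
    · refine ⟨u, Finset.mem_filter.mpr ⟨Finset.mem_univ u, huv⟩, ?_⟩
      simp only [Finset.mem_filter, Finset.mem_univ, true_and]
      exact fun hc => hirr u hc.1
    · intro x hx
      simp only [Finset.mem_filter, Finset.mem_univ, true_and] at hx ⊢
      exact hBtrans hx huv
  -- a B-maximal element of any nonempty finset
  have exMax : ∀ T : Finset V, T.Nonempty → ∃ t ∈ T, ∀ y ∈ T, ¬ B t y := by
    intro T hT
    obtain ⟨t, htT, hmax⟩ := T.exists_max_image h hT
    exact ⟨t, htT, fun y hy hBy => absurd (hmax y hy) (not_le.mpr (hmono hBy))⟩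
  -- key dichotomy
  have key : ∀ m : ℕ, ∀ S : Finset V,
      (∃ c : V → ℕ, (∀ v ∈ S, c v < m) ∧ ∀ u ∈ S, ∀ v ∈ S, c u = c v → ¬ A u v) ∨
      (∃ T : Finset V, T ⊆ S ∧ T.card = m + 1 ∧
        ∀ u ∈ T, ∀ v ∈ T, u ≠ v → B u v ∨ B v u) := by
    intro m
    induction m with
    | zero =>
      intro S
      rcases S.eq_empty_or_nonempty with hS | ⟨x, hx⟩
      · left
        exact ⟨fun _ => 0, by simp [hS], by simp [hS]⟩
      · right
        refine ⟨{x}, by simpa using hx, by simp, ?_⟩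
        intro u hu v hv hne
        simp only [Finset.mem_singleton] at hu hv
        exact absurd (hu.trans hv.symm) hne
    | succ m ih =>
      intro S
      set M : Finset V := S.filter (fun x => ∀ y ∈ S, ¬ B x y) with hM
      rcases ih (S \ M) with ⟨c, hlt, hc⟩ | ⟨T, hTS, hTcard, hTpair⟩
      · left
        refine ⟨fun v => if v ∈ M then m else c v, ?_, ?_⟩
        · intro v hv
          by_cases hvM : v ∈ M
          · simp [hvM]
          · simp only [hvM, if_false]
            exact (hlt v (Finset.mem_sdiff.mpr ⟨hv, hvM⟩)).trans (Nat.lt_succ_self m)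
        · intro u hu v hv hcv hA
          by_cases huM : u ∈ M <;> by_cases hvM : v ∈ M
          · -- both maximal: independent
            rcases eq_or_ne u v with rfl | hne
            · exact hirr u hA
            · rcases hcomp hne hA with hB' | hB'
              · exact (Finset.mem_filter.mp huM).2 v hv hB'
              · exact (Finset.mem_filter.mp hvM).2 u hu hB'
          · simp only [huM, hvM, if_true, if_false] at hcv
            exact absurd hcv.symm (Nat.ne_of_lt (hlt v (Finset.mem_sdiff.mpr ⟨hv, hvM⟩)))
          · simp only [huM, hvM, if_true, if_false] at hcv
            exact absurd hcv (Nat.ne_of_lt (hlt u (Finset.mem_sdiff.mpr ⟨hu, huM⟩)))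
          · simp only [huM, hvM, if_false] at hcv
            exact hc u (Finset.mem_sdiff.mpr ⟨hu, huM⟩) v (Finset.mem_sdiff.mpr ⟨hv, hvM⟩) hcv hA
      · right
        have hTne : T.Nonempty := Finset.card_pos.mp (by omega)
        obtain ⟨t, htT, htmax⟩ := exMax T hTne
        have htSM : t ∈ S \ M := hTS htT
        have htS : t ∈ S := (Finset.mem_sdiff.mp htSM).1
        have htM : t ∉ M := (Finset.mem_sdiff.mp htSM).2
        have : ∃ y ∈ S, B t y := by
          by_contra hcon
          push_neg at hcon
          exact htM (Finset.mem_filter.mpr ⟨htS, hcon⟩)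
        obtain ⟨y, hyS, hBty⟩ := this
        have hyT : y ∉ T := fun hy => htmax y hy hBty
        refine ⟨insert y T, ?_, ?_, ?_⟩
        · intro x hx
          rcases Finset.mem_insert.mp hx with rfl | hx
          · exact hyS
          · exact (Finset.mem_sdiff.mp (hTS hx)).1
        · rw [Finset.card_insert_of_notMem hyT, hTcard]
        · intro u hu v hv hne
          have key2 : ∀ z ∈ T, B z y := by
            intro z hz
            rcases eq_or_ne z t with rfl | hzt
            · exact hBty
            · rcases hTpair z hz t htT hzt with hB' | hB'
              · exact hBtrans hB' hBty
              · exact absurd hB' (htmax z hz)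
          rcases Finset.mem_insert.mp hu with rfl | hu
          · rcases Finset.mem_insert.mp hv with rfl | hv
            · exact absurd rfl hne
            · exact Or.inr (key2 v hv)
          · have hu2 : u ∈ T := hu
            rcases Finset.mem_insert.mp hv with rfl | hv
            · exact Or.inl (key2 u hu2)
            · exact hTpair u hu2 v hv hne
  rcases key k Finset.univ with ⟨c, hlt, hc⟩ | ⟨T, -, hTcard, hTpair⟩
  · exact absurd ⟨fun v => ⟨c v, hlt v (Finset.mem_univ v)⟩,
      fun u _ v _ hcv => hc u (Finset.mem_univ u) v (Finset.mem_univ v)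
        (by simpa using congrArg Fin.val hcv)⟩ hobs
  · have hTuniv : ∀ x : V, x ∈ T := by
      intro x
      by_contra hx
      obtain ⟨c, hc⟩ := hmin x
      have hmap : ∀ t ∈ T, c t ∈ (Finset.univ : Finset (Fin k)) := fun _ _ => Finset.mem_univ _
      obtain ⟨u, hu, v, hv, hne, hcv⟩ :=
        Finset.exists_ne_map_eq_of_card_lt_of_maps_to
          (by simp [hTcard]) hmap
      have hux : u ≠ x := fun h => hx (h ▸ hu)
      have hvx : v ≠ x := fun h => hx (h ▸ hv)
      have hu' : u ∈ ({x}ᶜ : Set V) := hux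
      have hv' : v ∈ ({x}ᶜ : Set V) := hvx
      rcases hTpair u hu v hv hne with hB' | hB'
      · exact hc u hu' v hv' hcv (hBA hB')
      · exact hc v hv' u hu' hcv.symm (hBA hB')
    have hTeq : T = Finset.univ := Finset.eq_univ_iff_forall.mpr hTuniv
    constructor
    · intro u v hne
      rcases hTpair u (hTuniv u) v (hTuniv v) hne with hB' | hB'
      · exact Or.inl (hBA hB')
      · exact Or.inr (hBA hB')
    · rw [← Finset.card_univ, ← hTeq, hTcard]
end

section
/- If G is a transitive digraph that is a minimal (k,ℓ)-obstruction with ℓ ≥ 1, then every strong clique of G has at most k+1 vertices. -/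
/-- A `(k,l)`-colouring of the subdigraph induced on `S`: a partition of `S`
into `k` independent sets (indexed by `Sum.inl`) and `l` strong cliques
(indexed by `Sum.inr`). -/
def KLColouringOn {V : Type*} (A : V → V → Prop) (k l : ℕ) (S : Set V) : Prop :=
  ∃ c : V → Fin k ⊕ Fin l,
    (∀ i : Fin k, ∀ u ∈ S, ∀ v ∈ S, c u = Sum.inl i → c v = Sum.inl i → ¬ A u v) ∧
    (∀ j : Fin l, ∀ u ∈ S, ∀ v ∈ S, c u = Sum.inr j → c v = Sum.inr j →
      u ≠ v → A u v ∧ A v u)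

theorem stmt_9 {V : Type*} [Fintype V] (A : V → V → Prop)
    (hirr : ∀ v, ¬ A v v)
    (htrans : ∀ u v w : V, u ≠ v → v ≠ w → u ≠ w → A u v → A v w → A u w)
    (k l : ℕ) (hl : 1 ≤ l)
    (hobs : ¬ KLColouringOn A k l Set.univ)
    (hmin : ∀ x : V, KLColouringOn A k l {x}ᶜ) :
    ∀ S : Finset V, StrongClique A ↑S → S.card ≤ k + 1 := by
  classical
  intro S hS
  by_contra hcard
  push_neg at hcard
  obtain ⟨x, hxS⟩ : ∃ x, x ∈ S := Finset.card_pos.mp (by omega)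
  obtain ⟨c, hind, hcl⟩ := hmin x
  set T := S.erase x with hT
  have hTcard : k < T.card := by
    rw [hT, Finset.card_erase_of_mem hxS]
    omega
  have hmem : ∀ u : V, u ≠ x → u ∈ ({x}ᶜ : Set V) := by
    intro u hu
    simpa using hu
  have hw : ∃ w ∈ T, ∃ j, c w = Sum.inr j := by
    by_contra hall
    push_neg at hall
    have hmap : ∀ w ∈ T,
        (match c w with | Sum.inl i => some i | Sum.inr _ => none)
          ∈ (Finset.univ : Finset (Fin k)).image some := by
      intro w hwT
      cases hc : c w with
      | inl i => simp [hc]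
      | inr j => exact absurd hc (hall w hwT j)
    have hlt : ((Finset.univ : Finset (Fin k)).image some).card < T.card := by
      calc ((Finset.univ : Finset (Fin k)).image some).card
          ≤ (Finset.univ : Finset (Fin k)).card := Finset.card_image_le
        _ = k := by simp
        _ < T.card := hTcard
    obtain ⟨u, hu, v, hv, huv, heq⟩ :=
      Finset.exists_ne_map_eq_of_card_lt_of_maps_to hlt hmap
    have hux : u ≠ x := (Finset.mem_erase.mp hu).1
    have hvx : v ≠ x := (Finset.mem_erase.mp hv).1
    cases hcu : c u with
    | inr j => exact absurd hcu (hall u hu j)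
    | inl i =>
      cases hcv : c v with
      | inr j => exact absurd hcv (hall v hv j)
      | inl i' =>
        rw [hcu, hcv] at heq
        simp only [Option.some.injEq] at heq
        subst heq
        have hA := hS (Finset.mem_of_mem_erase hu) (Finset.mem_of_mem_erase hv) huv
        exact hind i u (hmem u hux) v (hmem v hvx) hcu hcv hA.1
  obtain ⟨w, hwT, j, hcw⟩ := hw
  have hwx : w ≠ x := (Finset.mem_erase.mp hwT).1
  have hwS : w ∈ S := Finset.mem_of_mem_erase hwT
  have hdig : A x w ∧ A w x := hS hxS hwS (Ne.symm hwx)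
  have key : ∀ v, v ≠ x → c v = Sum.inr j → A x v ∧ A v x := by
    intro v hvx hcv
    by_cases hvw : v = w
    · subst hvw; exact hdig
    · have h1 := hcl j w (hmem w hwx) v (hmem v hvx) hcw hcv (Ne.symm hvw)
      constructor
      · exact htrans x w v (Ne.symm hwx) (Ne.symm hvw) (Ne.symm hvx) hdig.1 h1.1
      · exact htrans v w x hvw hwx hvx h1.2 hdig.2
  apply hobs
  refine ⟨Function.update c x (Sum.inr j), ?_, ?_⟩
  · intro i u _ v _ hu hv
    have hux : u ≠ x := by rintro rfl; simp at hu
    have hvx : v ≠ x := by rintro rfl; simp at hv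
    rw [Function.update_of_ne hux] at hu
    rw [Function.update_of_ne hvx] at hv
    exact hind i u (hmem u hux) v (hmem v hvx) hu hv
  · intro j' u _ v _ hu hv huv
    by_cases hux : u = x
    · have hvx : v ≠ x := fun h => huv (hux.trans h.symm)
      rw [hux, Function.update_self] at hu
      rw [Function.update_of_ne hvx] at hv
      have hj : j' = j := by injection hu.symm
      subst hj
      rw [hux]
      exact key v hvx hv
    · rw [Function.update_of_ne hux] at hu
      by_cases hvx : v = x
      · rw [hvx, Function.update_self] at hv
        have hj : j' = j := by injection hv.symm
        subst hj
        rw [hvx]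
        exact ⟨(key u hux hu).2, (key u hux hu).1⟩
      · rw [Function.update_of_ne hvx] at hv
        exact hcl j' u (hmem u hux) v (hmem v hvx) hu hv huv
end

section
/- Every transitive digraph that is a minimal (1,ℓ)-obstruction has at most 2(ℓ+1) vertices. -/
open Finset
open scoped Classical
set_option linter.unusedSectionVars false
set_option maxHeartbeats 1000000



section Aux

variable {V : Type*} [Fintype V]

/-- same strong component (or equal) -/
def SRel (A : V → V → Prop) (u v : V) : Prop := u = v ∨ (A u v ∧ A v u)

variable {A : V → V → Prop}

lemma rel_refl (v : V) : SRel A v v := Or.inl rfl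

lemma rel_symm {u v : V} (h : SRel A u v) : SRel A v u := by
  rcases h with h | ⟨h1, h2⟩
  · exact Or.inl h.symm
  · exact Or.inr ⟨h2, h1⟩

lemma rel_trans (hirr : ∀ v, ¬ A v v)
    (htrans : ∀ u v w : V, u ≠ v → v ≠ w → u ≠ w → A u v → A v w → A u w)
    {u v w : V} (h1 : SRel A u v) (h2 : SRel A v w) : SRel A u w := by
  rcases h1 with rfl | ⟨a1, a2⟩
  · exact h2
  rcases h2 with rfl | ⟨b1, b2⟩
  · exact Or.inr ⟨a1, a2⟩
  have huv : u ≠ v := by rintro rfl; exact hirr u a1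
  have hvw : v ≠ w := by rintro rfl; exact hirr v b1
  by_cases huw : u = w
  · exact Or.inl huw
  · exact Or.inr ⟨htrans u v w huv hvw huw a1 b1, htrans w v u (Ne.symm hvw) (Ne.symm huv) (Ne.symm huw) b2 a2⟩

noncomputable def cls (A : V → V → Prop) (v : V) : Finset V :=
  univ.filter (fun u => SRel A u v)

lemma mem_cls {u v : V} : u ∈ cls A v ↔ SRel A u v := by simp [cls]

lemma self_mem_cls (v : V) : v ∈ cls A v := mem_cls.2 (rel_refl v)

lemma cls_eq_of_rel (hirr : ∀ v, ¬ A v v)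
    (htrans : ∀ u v w : V, u ≠ v → v ≠ w → u ≠ w → A u v → A v w → A u w)
    {u v : V} (h : SRel A u v) : cls A u = cls A v := by
  ext w
  simp only [mem_cls]
  exact ⟨fun hw => rel_trans hirr htrans hw h, fun hw => rel_trans hirr htrans hw (rel_symm h)⟩

lemma rel_of_mem_cls {u v : V} (h : u ∈ cls A v) : SRel A u v := mem_cls.1 h

lemma sym_of_rel_ne {u v : V} (h : SRel A u v) (hne : u ≠ v) : A u v ∧ A v u := by
  rcases h with h | h
  · exact absurd h hne
  · exact h

end Aux

section Order

variable {α : Type*} [DecidableEq α] {r : α → α → Prop}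

/-- an antichain inside `S` for relation `r` -/
def ACr (r : α → α → Prop) (S W : Finset α) : Prop :=
  W ⊆ S ∧ ∀ u ∈ W, ∀ v ∈ W, ¬ r u v

lemma chain_helper (htr : Transitive r) (hir : ∀ x, ¬ r x x) (T : Finset α) :
    ∀ (n : ℕ) (x : α), x ∈ T → (T.filter (fun y => r x y)).card ≤ n →
      ∃ z ∈ T, (x = z ∨ r x z) ∧ ∀ y ∈ T, ¬ r z y := by
  intro n
  induction n with
  | zero =>
    intro x hx hc
    refine ⟨x, hx, Or.inl rfl, fun y hy hr => ?_⟩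
    have : y ∈ T.filter (fun y => r x y) := mem_filter.2 ⟨hy, hr⟩
    simp [Finset.card_eq_zero.1 (Nat.le_zero.1 hc)] at this
  | succ n ih =>
    intro x hx hc
    by_cases h : ∀ y ∈ T, ¬ r x y
    · exact ⟨x, hx, Or.inl rfl, h⟩
    · push_neg at h
      obtain ⟨y, hy, hxy⟩ := h
      have hsub : T.filter (fun z => r y z) ⊆ T.filter (fun z => r x z) := by
        intro z hz
        rw [mem_filter] at hz ⊢
        exact ⟨hz.1, htr hxy hz.2⟩
      have hmemx : y ∈ T.filter (fun z => r x z) := mem_filter.2 ⟨hy, hxy⟩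
      have hmemy : y ∉ T.filter (fun z => r y z) := by
        simp [hir y]
      have hlt : (T.filter (fun z => r y z)).card < (T.filter (fun z => r x z)).card :=
        Finset.card_lt_card ⟨hsub, fun hsub' => hmemy (hsub' hmemx)⟩
      obtain ⟨z, hz, hyz, hzmax⟩ := ih y hy (by omega)
      refine ⟨z, hz, Or.inr ?_, hzmax⟩
      rcases hyz with rfl | hyz
      · exact hxy
      · exact htr hxy hyz

lemma exists_top [Fintype α] (htr : Transitive r) (hir : ∀ x, ¬ r x x)
    (S : Finset α) (n : ℕ)
    (hmax : ∀ W, ACr r S W → W.card ≤ n)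
    (hex : ∃ B, ACr r S B ∧ B.card = n) :
    ∃ B, ACr r S B ∧ B.card = n ∧
      ∀ C, ACr r S C → C.card = n → ∀ c ∈ C, ∃ z ∈ B, c = z ∨ r c z := by
  classical
  set T : Finset (Finset α) :=
    S.powerset.filter (fun B => (∀ u ∈ B, ∀ v ∈ B, ¬ r u v) ∧ B.card = n) with hT
  have hmemT : ∀ B, B ∈ T ↔ ACr r S B ∧ B.card = n := by
    intro B
    simp only [hT, mem_filter, mem_powerset, ACr]
    tauto
  obtain ⟨B0, hB0⟩ := hex
  have hTne : T.Nonempty := ⟨B0, (hmemT B0).2 hB0⟩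
  set D : Finset α → Finset α :=
    fun B => S.filter (fun y => ∃ x ∈ B, y = x ∨ r y x) with hD
  obtain ⟨B, hBT, hBmax⟩ := Finset.exists_max_image T (fun B => (D B).card) hTne
  obtain ⟨⟨hBS, hBac⟩, hBcard⟩ := (hmemT B).1 hBT
  refine ⟨B, ⟨hBS, hBac⟩, hBcard, ?_⟩
  intro C hC hCcard c hcC
  -- the join of B and C
  set U : Finset α := B ∪ C with hU
  set J : Finset α := U.filter (fun x => ∀ y ∈ U, ¬ r x y) with hJ
  set Jm : Finset α := U.filter (fun x => ∀ y ∈ U, ¬ r y x) with hJm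
  have hUS : U ⊆ S := union_subset hBS hC.1
  have hJac : ACr r S J := by
    refine ⟨(filter_subset _ _).trans hUS, ?_⟩
    intro u hu v hv
    rw [hJ, mem_filter] at hu hv
    exact hu.2 v (hv.1)
  have hJmac : ACr r S Jm := by
    refine ⟨(filter_subset _ _).trans hUS, ?_⟩
    intro u hu v hv hr
    rw [hJm, mem_filter] at hu hv
    exact hv.2 u hu.1 hr
  -- Jm ∪ J = U
  have hcover : U ⊆ Jm ∪ J := by
    intro x hxU
    by_contra hx
    rw [mem_union, hJ, hJm, mem_filter, mem_filter] at hx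
    push_neg at hx
    obtain ⟨h1, h2⟩ := hx
    obtain ⟨b, hb, hbx⟩ := h1 hxU
    obtain ⟨b', hb', hxb'⟩ := h2 hxU
    rcases mem_union.1 hxU with hxB | hxC
    · have hbC : b ∈ C := by
        rcases mem_union.1 hb with h | h
        · exact absurd hbx (hBac b h x hxB)
        · exact h
      have hb'C : b' ∈ C := by
        rcases mem_union.1 hb' with h | h
        · exact absurd hxb' (hBac x hxB b' h)
        · exact h
      exact hC.2 b hbC b' hb'C (htr hbx hxb')
    · have hbB : b ∈ B := by
        rcases mem_union.1 hb with h | h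
        · exact h
        · exact absurd hbx (hC.2 b h x hxC)
      have hb'B : b' ∈ B := by
        rcases mem_union.1 hb' with h | h
        · exact h
        · exact absurd hxb' (hC.2 x hxC b' h)
      exact hBac b hbB b' hb'B (htr hbx hxb')
  have hinter : B ∩ C ⊆ Jm ∩ J := by
    intro x hx
    rw [mem_inter] at hx
    rw [mem_inter, hJ, hJm, mem_filter, mem_filter]
    refine ⟨⟨mem_union_left _ hx.1, fun y hy hr => ?_⟩, ⟨mem_union_left _ hx.1, fun y hy hr => ?_⟩⟩
    · rcases mem_union.1 hy with h | h
      · exact hBac y h x hx.1 hr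
      · exact hC.2 y h x hx.2 hr
    · rcases mem_union.1 hy with h | h
      · exact hBac x hx.1 y h hr
      · exact hC.2 x hx.2 y h hr
  have hJcard : J.card = n := by
    have h1 : (Jm ∪ J).card + (Jm ∩ J).card = Jm.card + J.card :=
      Finset.card_union_add_card_inter _ _
    have h2 : U.card ≤ (Jm ∪ J).card := Finset.card_le_card hcover
    have h3 : (B ∩ C).card ≤ (Jm ∩ J).card := Finset.card_le_card hinter
    have h4 : U.card + (B ∩ C).card = B.card + C.card := by
      rw [hU]; exact Finset.card_union_add_card_inter _ _
    have h5 : Jm.card ≤ n := hmax _ hJmac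
    have h6 : J.card ≤ n := hmax _ hJac
    omega
  have hup : ∀ x ∈ U, ∃ z ∈ J, x = z ∨ r x z := by
    intro x hx
    obtain ⟨z, hz, hxz, hzmax⟩ := chain_helper htr hir U (U.filter (fun y => r x y)).card x hx le_rfl
    exact ⟨z, mem_filter.2 ⟨hz, hzmax⟩, hxz⟩
  have hdownJ : ∀ W : Finset α, W ⊆ U → D W ⊆ D J := by
    intro W hW y hy
    rw [hD, mem_filter] at hy ⊢
    obtain ⟨hyS, x, hxW, hyx⟩ := hy
    obtain ⟨z, hzJ, hxz⟩ := hup x (hW hxW)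
    refine ⟨hyS, z, hzJ, ?_⟩
    rcases hyx with rfl | hyx
    · exact hxz
    · rcases hxz with rfl | hxz
      · exact Or.inr hyx
      · exact Or.inr (htr hyx hxz)
  have hJT : J ∈ T := (hmemT J).2 ⟨hJac, hJcard⟩
  have hDeq : D J = D B := by
    refine (Finset.eq_of_subset_of_card_le (hdownJ B subset_union_left) ?_).symm
    exact hBmax J hJT
  have hcD : c ∈ D C := by
    rw [hD, mem_filter]
    exact ⟨hC.1 hcC, c, hcC, Or.inl rfl⟩
  have : c ∈ D B := by
    rw [← hDeq]
    exact hdownJ C subset_union_right hcD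
  rw [hD, mem_filter] at this
  exact this.2


lemma ACr_flip {S W : Finset α} (h : ACr r S W) : ACr (fun u v => r v u) S W :=
  ⟨h.1, fun u hu v hv hr => h.2 v hv u hu hr⟩

lemma key_disjoint_antichains [Fintype α] (htr : Transitive r) (hir : ∀ x, ¬ r x x)
    (S : Finset α) (n : ℕ)
    (hmax : ∀ W, ACr r S W → W.card ≤ n)
    (havoid : ∀ x ∈ S, ∃ W, ACr r S W ∧ W.card = n ∧ x ∉ W)
    (hex : ∃ B, ACr r S B ∧ B.card = n) :
    2 * n ≤ S.card := by
  classical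
  obtain ⟨Bt, hBtac, hBtcard, hBttop⟩ := exists_top htr hir S n hmax hex
  have htr' : Transitive (fun u v : α => r v u) := fun a b c h1 h2 => htr h2 h1
  have hir' : ∀ x : α, ¬ (fun u v : α => r v u) x x := hir
  obtain ⟨Bb, hBbac, hBbcard, hBbtop⟩ := exists_top htr' hir' S n
    (fun W hW => hmax W ⟨hW.1, fun u hu v hv hr => hW.2 v hv u hu hr⟩)
    (hex.imp (fun B hB => ⟨ACr_flip hB.1, hB.2⟩))
  have hdisj : Disjoint Bt Bb := by
    rw [Finset.disjoint_left]
    intro x hxt hxb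
    have hxS : x ∈ S := hBtac.1 hxt
    obtain ⟨C, hCac, hCcard, hxC⟩ := havoid x hxS
    -- x comparable with some element of C
    have hcomp : ∃ c ∈ C, r x c ∨ r c x := by
      by_contra h
      push_neg at h
      have hins : ACr r S (insert x C) := by
        refine ⟨insert_subset hxS hCac.1, ?_⟩
        intro u hu v hv
        rcases mem_insert.1 hu with hu' | hu'
        · rcases mem_insert.1 hv with hv' | hv'
          · subst hu'; subst hv'; exact hir _
          · subst hu'; exact fun hr => (h v hv').1 hr
        · rcases mem_insert.1 hv with hv' | hv'
          · subst hv'; exact fun hr => (h u hu').2 hr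
          · exact hCac.2 u hu' v hv'
      have := hmax _ hins
      rw [Finset.card_insert_of_notMem hxC, hCcard] at this
      omega
    obtain ⟨c, hcC, hc⟩ := hcomp
    rcases hc with hxc | hcx
    · obtain ⟨z, hzBt, hcz⟩ := hBttop C hCac hCcard c hcC
      have hxz : r x z := by
        rcases hcz with rfl | hcz
        · exact hxc
        · exact htr hxc hcz
      exact hBtac.2 x hxt z hzBt hxz
    · obtain ⟨z, hzBb, hcz⟩ := hBbtop C (ACr_flip hCac) hCcard c hcC
      have hzx : r z x := by
        rcases hcz with rfl | hcz
        · exact hcx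
        · exact htr hcz hcx
      exact hBbac.2 x hxb z hzBb hzx
  have : (Bt ∪ Bb).card ≤ S.card := Finset.card_le_card (union_subset hBtac.1 hBbac.1)
  rw [Finset.card_union_of_disjoint hdisj, hBtcard, hBbcard] at this
  omega

end Order
section Colouring

variable {V : Type*} [Fintype V] {A : V → V → Prop}

lemma build_colouring (hirr : ∀ v, ¬ A v v)
    (htrans : ∀ u v w : V, u ≠ v → v ≠ w → u ≠ w → A u v → A v w → A u w)
    (l : ℕ) (W : Finset V)
    (hWS : ∀ v ∈ W, cls A v = {v})
    (hWI : ∀ u ∈ W, ∀ v ∈ W, ¬ A u v)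
    (hcard : (univ.image (cls A)).card ≤ l + W.card) :
    KLColouringOn A 1 l Set.univ := by
  classical
  set C : Finset (Finset V) := univ.image (cls A) with hC
  set D : Finset (Finset V) := C.filter (fun K => ¬ ∃ w ∈ W, K = {w}) with hDdef
  have hsing : C.filter (fun K => ∃ w ∈ W, K = {w}) = W.image (fun w => ({w} : Finset V)) := by
    ext K
    simp only [mem_filter, mem_image]
    constructor
    · rintro ⟨-, w, hw, rfl⟩; exact ⟨w, hw, rfl⟩
    · rintro ⟨w, hw, rfl⟩
      refine ⟨?_, w, hw, rfl⟩
      rw [hC, mem_image]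
      exact ⟨w, mem_univ w, hWS w hw⟩
  have hsingcard : (C.filter (fun K => ∃ w ∈ W, K = {w})).card = W.card := by
    rw [hsing]
    exact Finset.card_image_of_injective _ (fun a b h => Finset.singleton_injective h)
  have hDcard : D.card ≤ l := by
    have h1 := Finset.card_filter_add_card_filter_not
      (s := C) (p := fun K => ∃ w ∈ W, K = {w})
    have h2 : (C.filter (fun a => ¬ ∃ w ∈ W, a = {w})) = D := by
      rw [hDdef]
    rw [hsingcard, h2] at h1
    omega
  have hmemD : ∀ v : V, v ∉ W → cls A v ∈ D := by
    intro v hv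
    rw [hDdef, mem_filter]
    refine ⟨by rw [hC, mem_image]; exact ⟨v, mem_univ v, rfl⟩, ?_⟩
    rintro ⟨w, hw, hEq⟩
    have : v ∈ ({w} : Finset V) := hEq ▸ self_mem_cls v
    rw [Finset.mem_singleton] at this
    exact hv (this ▸ hw)
  refine ⟨fun v => if h : v ∈ W then Sum.inl 0 else
    Sum.inr (Fin.castLE hDcard (D.equivFin ⟨cls A v, hmemD v h⟩)), ?_, ?_⟩
  · intro i u _ v _ hu hv
    by_cases huW : u ∈ W
    · by_cases hvW : v ∈ W
      · exact hWI u huW v hvW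
      · simp [hvW] at hv
    · simp [huW] at hu
  · intro j u _ v _ hu hv huv
    by_cases huW : u ∈ W
    · simp [huW] at hu
    by_cases hvW : v ∈ W
    · simp [hvW] at hv
    simp only [huW, hvW, dite_false] at hu hv
    rw [← hv] at hu
    have h1 := Sum.inr.inj hu
    have h2 := Fin.castLE_injective hDcard h1
    have h3 := D.equivFin.injective h2
    have h4 : cls A u = cls A v := congrArg Subtype.val h3
    have h5 : SRel A u v := rel_of_mem_cls (h4 ▸ self_mem_cls u)
    exact sym_of_rel_ne h5 huv

end Colouring
section Extract

variable {V : Type*} [Fintype V] {A : V → V → Prop}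

lemma extract_antichain (hirr : ∀ v, ¬ A v v)
    (htrans : ∀ u v w : V, u ≠ v → v ≠ w → u ≠ w → A u v → A v w → A u w)
    (l : ℕ) (x : V) (h : KLColouringOn A 1 l ({x}ᶜ : Set V)) :
    ∃ W : Finset V, (∀ u ∈ W, ∀ v ∈ W, ¬ A u v) ∧ x ∉ W ∧
      (∀ v ∈ W, v ≠ x ∧ (cls A v).erase x = {v}) ∧
      ((univ.erase x).image (fun v => (cls A v).erase x)).card ≤ l + W.card := by
  classical
  obtain ⟨c, hind, hcl⟩ := h
  have hmemc : ∀ u : V, u ≠ x → u ∈ ({x}ᶜ : Set V) := by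
    intro u hu; simp [hu]
  set W : Finset V :=
    (univ.erase x).filter (fun v => c v = Sum.inl 0 ∧ (cls A v).erase x = {v}) with hW
  have hWne : ∀ v ∈ W, v ≠ x := by
    intro v hv
    rw [hW, mem_filter, mem_erase] at hv
    exact hv.1.1
  have hWinl : ∀ v ∈ W, c v = Sum.inl 0 := by
    intro v hv
    rw [hW, mem_filter] at hv
    exact hv.2.1
  set Cx : Finset (Finset V) := (univ.erase x).image (fun v => (cls A v).erase x) with hCx
  set Dx : Finset (Finset V) := Cx.filter (fun K => ¬ ∃ w ∈ W, K = {w}) with hDx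
  have hKrep : ∀ K ∈ Cx, ∀ u ∈ K, u ≠ x ∧ K = (cls A u).erase x := by
    intro K hK u hu
    rw [hCx, mem_image] at hK
    obtain ⟨v, hv, rfl⟩ := hK
    rw [mem_erase] at hu
    refine ⟨hu.1, ?_⟩
    rw [cls_eq_of_rel hirr htrans (rel_of_mem_cls hu.2)]
  have hDxwitness : ∀ K ∈ Dx, ∃ j : Fin l, ∃ u ∈ K, u ≠ x ∧ c u = Sum.inr j := by
    intro K hK
    rw [hDx, mem_filter] at hK
    obtain ⟨hKCx, hKns⟩ := hK
    by_contra hcon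
    push_neg at hcon
    have hallinl : ∀ u ∈ K, c u = Sum.inl 0 := by
      intro u hu
      have hux : u ≠ x := (hKrep K hKCx u hu).1
      rcases hc : c u with i | j
      · exact congrArg Sum.inl (Subsingleton.elim i 0)
      · exact absurd hc (hcon j u hu hux)
    obtain ⟨v, hv, rfl⟩ := by rw [hCx, mem_image] at hKCx; exact hKCx
    rw [mem_erase] at hv
    have hvK : v ∈ (cls A v).erase x := mem_erase.2 ⟨hv.1, self_mem_cls v⟩
    have hKsing : (cls A v).erase x = {v} := by
      apply Finset.eq_singleton_iff_unique_mem.2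
      refine ⟨hvK, ?_⟩
      intro u hu
      by_contra huv
      have hux : u ≠ x := (mem_erase.1 hu).1
      have hrel : SRel A u v := rel_of_mem_cls (mem_erase.1 hu).2
      have hsym := sym_of_rel_ne hrel huv
      exact hind 0 u (hmemc u hux) v (hmemc v hv.1) (hallinl u hu) (hallinl v hvK) hsym.1
    refine hKns ⟨v, ?_, hKsing⟩
    rw [hW, mem_filter, mem_erase]
    exact ⟨⟨hv.1, mem_univ v⟩, hallinl v hvK, hKsing⟩
  have hDxcard : Dx.card ≤ l := by
    rcases Finset.eq_empty_or_nonempty Dx with hDe | hDne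
    · simp [hDe]
    · obtain ⟨K0, hK0⟩ := hDne
      obtain ⟨j0, _⟩ := hDxwitness K0 hK0
      have : Nonempty (Fin l) := ⟨j0⟩
      set f : Finset V → Fin l := fun K =>
        if h : ∃ j : Fin l, ∃ u ∈ K, u ≠ x ∧ c u = Sum.inr j then h.choose
        else Classical.arbitrary _ with hf
      have hfspec : ∀ K ∈ Dx, ∃ u ∈ K, u ≠ x ∧ c u = Sum.inr (f K) := by
        intro K hK
        have hE := hDxwitness K hK
        rw [hf]
        simp only [hE, dif_pos]
        exact hE.choose_spec
      have hinj : Set.InjOn f Dx := by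
        intro K hK K' hK' hff
        rw [Finset.mem_coe] at hK hK'
        obtain ⟨u, hu, hux, hcu⟩ := hfspec K hK
        obtain ⟨u', hu', hux', hcu'⟩ := hfspec K' hK'
        have hKCx : K ∈ Cx := mem_of_mem_filter _ (hDx ▸ hK)
        have hK'Cx : K' ∈ Cx := mem_of_mem_filter _ (hDx ▸ hK')
        have hKe := (hKrep K hKCx u hu).2
        have hK'e := (hKrep K' hK'Cx u' hu').2
        by_cases huu : u = u'
        · rw [hKe, hK'e, huu]
        · have hsym := hcl (f K) u (hmemc u hux) u' (hmemc u' hux')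
            hcu (by rw [hcu', hff]) huu
          have : cls A u = cls A u' := cls_eq_of_rel hirr htrans (Or.inr hsym)
          rw [hKe, hK'e, this]
      calc Dx.card ≤ (univ : Finset (Fin l)).card :=
            Finset.card_le_card_of_injOn f (fun _ _ => mem_univ _) hinj
        _ = l := by simp
  have hsingcard : (Cx.filter (fun K => ∃ w ∈ W, K = {w})).card ≤ W.card := by
    have hsub : Cx.filter (fun K => ∃ w ∈ W, K = {w}) ⊆ W.image (fun w => ({w} : Finset V)) := by
      intro K hK
      rw [mem_filter] at hK
      obtain ⟨-, w, hw, rfl⟩ := hK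
      exact mem_image_of_mem _ hw
    calc (Cx.filter (fun K => ∃ w ∈ W, K = {w})).card
        ≤ (W.image (fun w => ({w} : Finset V))).card := Finset.card_le_card hsub
      _ ≤ W.card := Finset.card_image_le
  refine ⟨W, ?_, ?_, ?_, ?_⟩
  · intro u hu v hv
    exact hind 0 u (hmemc u (hWne u hu)) v (hmemc v (hWne v hv)) (hWinl u hu) (hWinl v hv)
  · intro hx
    exact (hWne x hx) rfl
  · intro v hv
    rw [hW, mem_filter, mem_erase] at hv
    exact ⟨hv.1.1, hv.2.2⟩
  · have h1 := Finset.card_filter_add_card_filter_not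
      (s := Cx) (p := fun K => ∃ w ∈ W, K = {w})
    have h2 : (Cx.filter (fun a => ¬ ∃ w ∈ W, a = {w})) = Dx := by rw [hDx]
    rw [h2] at h1
    omega

end Extract
section Struct

variable {V : Type*} [Fintype V] {A : V → V → Prop}

lemma cls_eq_of_mem (hirr : ∀ v, ¬ A v v)
    (htrans : ∀ u v w : V, u ≠ v → v ≠ w → u ≠ w → A u v → A v w → A u w)
    {K : Finset V} (hK : K ∈ univ.image (cls A)) {u : V} (hu : u ∈ K) :
    K = cls A u := by
  rw [mem_image] at hK
  obtain ⟨v, -, rfl⟩ := hK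
  rw [cls_eq_of_rel hirr htrans (rel_of_mem_cls hu)]

lemma cls_nonempty_mem {K : Finset V} (hK : K ∈ univ.image (cls A)) : K.Nonempty := by
  rw [mem_image] at hK
  obtain ⟨v, -, rfl⟩ := hK
  exact ⟨v, self_mem_cls v⟩

/-- Case: `x` is a singleton class -/
lemma Cx_singleton_case (hirr : ∀ v, ¬ A v v)
    (htrans : ∀ u v w : V, u ≠ v → v ≠ w → u ≠ w → A u v → A v w → A u w)
    {x : V} (hx : cls A x = {x}) :
    (univ.erase x).image (fun v => (cls A v).erase x) = (univ.image (cls A)).erase {x} := by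
  classical
  have hnotmem : ∀ v : V, v ≠ x → x ∉ cls A v := by
    intro v hv hmem
    have : cls A x = cls A v := cls_eq_of_rel hirr htrans (rel_of_mem_cls hmem)
    have hvv : v ∈ cls A x := this ▸ self_mem_cls v
    rw [hx, Finset.mem_singleton] at hvv
    exact hv hvv
  ext K
  simp only [mem_image, mem_erase]
  constructor
  · rintro ⟨v, ⟨hvx, -⟩, rfl⟩
    rw [Finset.erase_eq_of_notMem (hnotmem v hvx)]
    constructor
    · intro hEq
      have := self_mem_cls (A := A) v
      rw [hEq, Finset.mem_singleton] at this
      exact hvx this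
    · exact ⟨v, mem_univ v, rfl⟩
  · rintro ⟨hKne, v, -, rfl⟩
    have hvx : v ≠ x := by
      rintro rfl
      exact hKne hx
    exact ⟨v, ⟨hvx, mem_univ v⟩, Finset.erase_eq_of_notMem (hnotmem v hvx)⟩

/-- Case: `x` is in a class of size ≥ 2 -/
lemma Cx_big_case (hirr : ∀ v, ¬ A v v)
    (htrans : ∀ u v w : V, u ≠ v → v ≠ w → u ≠ w → A u v → A v w → A u w)
    {x : V} (hx : 2 ≤ (cls A x).card) :
    ((univ.erase x).image (fun v => (cls A v).erase x)).card = (univ.image (cls A)).card := by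
  classical
  set C : Finset (Finset V) := univ.image (cls A) with hC
  obtain ⟨y, hy, hyx⟩ : ∃ y ∈ cls A x, y ≠ x := by
    obtain ⟨a, ha, b, hb, hab⟩ := Finset.one_lt_card.1 hx
    by_cases hax : a = x
    · exact ⟨b, hb, by rw [← hax]; exact fun h => hab h.symm⟩
    · exact ⟨a, ha, hax⟩
  have hrep : ∀ K ∈ C, ∃ v, v ≠ x ∧ K = cls A v := by
    intro K hK
    by_cases hxK : x ∈ K
    · have : K = cls A x := cls_eq_of_mem hirr htrans hK hxK
      exact ⟨y, hyx, by rw [this, cls_eq_of_rel hirr htrans (rel_of_mem_cls hy)]⟩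
    · obtain ⟨v, hv⟩ := cls_nonempty_mem hK
      exact ⟨v, fun h => hxK (h ▸ hv), cls_eq_of_mem hirr htrans hK hv⟩
  have himg : (univ.erase x).image (fun v => (cls A v).erase x) = C.image (fun K => K.erase x) := by
    ext K
    simp only [mem_image]
    constructor
    · rintro ⟨v, hv, rfl⟩
      exact ⟨cls A v, mem_image_of_mem _ (mem_univ v), rfl⟩
    · rintro ⟨K', hK', rfl⟩
      obtain ⟨v, hvx, rfl⟩ := hrep K' hK'
      exact ⟨v, mem_erase.2 ⟨hvx, mem_univ v⟩, rfl⟩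
  rw [himg]
  apply Finset.card_image_of_injOn
  intro K1 hK1 K2 hK2 hEq
  have hEq' : K1.erase x = K2.erase x := hEq
  clear hEq
  rename' hEq' => hEq
  rw [Finset.mem_coe] at hK1 hK2
  have hcase : ∀ K ∈ C, x ∈ K → K = cls A x := fun K hK hxK => cls_eq_of_mem hirr htrans hK hxK
  have haux : ∀ K K' : Finset V, K ∈ C → K' ∈ C → K.erase x = K'.erase x →
      x ∈ K → x ∉ K' → False := by
    intro K K' hK hK' hE hxK hxK'
    obtain ⟨u, hu⟩ := cls_nonempty_mem hK'
    have hux : u ≠ x := fun h => hxK' (h ▸ hu)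
    have huK : u ∈ K := by
      have : u ∈ K'.erase x := mem_erase.2 ⟨hux, hu⟩
      rw [← hE] at this
      exact (mem_erase.1 this).2
    have h1 : K = cls A u := cls_eq_of_mem hirr htrans hK huK
    have h2 : K' = cls A u := cls_eq_of_mem hirr htrans hK' hu
    rw [h1, ← h2] at hxK
    exact hxK' hxK
  by_cases h1 : x ∈ K1 <;> by_cases h2 : x ∈ K2
  · rw [hcase K1 hK1 h1, hcase K2 hK2 h2]
  · exact absurd (haux K1 K2 hK1 hK2 hEq h1 h2) not_false
  · exact absurd (haux K2 K1 hK2 hK1 hEq.symm h2 h1) not_false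
  · rw [Finset.erase_eq_of_notMem h1, Finset.erase_eq_of_notMem h2] at hEq
    exact hEq

/-- counting: `|V| + #singleton classes ≤ 2 * #classes` when all classes have ≤ 2 elements -/
lemma counting (hirr : ∀ v, ¬ A v v)
    (htrans : ∀ u v w : V, u ≠ v → v ≠ w → u ≠ w → A u v → A v w → A u w)
    (hsize : ∀ K ∈ univ.image (cls A), K.card ≤ 2) :
    Fintype.card V + (univ.filter (fun v => cls A v = {v})).card
      ≤ 2 * (univ.image (cls A)).card := by
  classical
  set C : Finset (Finset V) := univ.image (cls A) with hC
  have hfib : ∀ K ∈ C, univ.filter (fun v => cls A v = K) = K := by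
    intro K hK
    obtain ⟨v, -, rfl⟩ := mem_image.1 hK
    ext u
    simp only [mem_filter, mem_univ, true_and]
    constructor
    · intro h
      exact mem_cls.2 (rel_of_mem_cls (h ▸ self_mem_cls u))
    · intro h
      exact (cls_eq_of_mem hirr htrans hK h).symm
  have hcardV : Fintype.card V = ∑ K ∈ C, K.card := by
    rw [← Finset.card_univ]
    rw [Finset.card_eq_sum_card_fiberwise (f := cls A) (t := C)
      (fun v _ => mem_image_of_mem _ (mem_univ v))]
    exact Finset.sum_congr rfl (fun K hK => by rw [hfib K hK])
  have hsing : (univ.filter (fun v => cls A v = {v})).card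
      = (C.filter (fun K => K.card = 1)).card := by
    apply Finset.card_bij (fun v _ => cls A v)
    · intro v hv
      rw [mem_filter] at hv
      rw [mem_filter]
      exact ⟨mem_image_of_mem _ (mem_univ v), by rw [hv.2]; simp⟩
    · intro u hu v hv hEq
      rw [mem_filter] at hu hv
      rw [hu.2, hv.2] at hEq
      exact Finset.singleton_injective hEq
    · intro K hK
      rw [mem_filter] at hK
      obtain ⟨v, hv⟩ := Finset.card_eq_one.1 hK.2
      have hvK : v ∈ K := hv ▸ Finset.mem_singleton_self v
      have : K = cls A v := cls_eq_of_mem hirr htrans hK.1 hvK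
      refine ⟨v, ?_, this.symm⟩
      rw [mem_filter]
      exact ⟨mem_univ v, by rw [← this, hv]⟩
  rw [hcardV, hsing, Finset.card_filter, ← Finset.sum_add_distrib]
  have h2C : 2 * C.card = ∑ _K ∈ C, 2 := by
    rw [Finset.sum_const, smul_eq_mul, mul_comm]
  rw [h2C]
  apply Finset.sum_le_sum
  intro K hK
  have h1 : 1 ≤ K.card := Finset.card_pos.2 (cls_nonempty_mem hK)
  have h2 : K.card ≤ 2 := hsize K hK
  by_cases hc : K.card = 1 <;> simp [hc] <;> omega

end Struct
theorem stmt_11 {V : Type*} [Fintype V] (A : V → V → Prop)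
    (hirr : ∀ v, ¬ A v v)
    (htrans : ∀ u v w : V, u ≠ v → v ≠ w → u ≠ w → A u v → A v w → A u w)
    (l : ℕ)
    (hobs : ¬ KLColouringOn A 1 l Set.univ)
    (hmin : ∀ x : V, KLColouringOn A 1 l {x}ᶜ) :
    Fintype.card V ≤ 2 * (l + 1) := by
  classical
  have hmemSg : ∀ v : V, v ∈ univ.filter (fun v => cls A v = {v}) ↔ cls A v = {v} := by
    intro v; rw [mem_filter]; simp
  have hr_trans : Transitive (fun u v : V => A u v ∧ ¬ A v u) := by
    intro u v w h1 h2
    have huv : u ≠ v := by rintro rfl; exact hirr u h1.1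
    have hvw : v ≠ w := by rintro rfl; exact hirr v h2.1
    have huw : u ≠ w := by
      rintro rfl
      exact h1.2 h2.1
    refine ⟨htrans u v w huv hvw huw h1.1 h2.1, fun hwu => ?_⟩
    exact h1.2 (htrans v w u hvw (Ne.symm huw) (Ne.symm huv) h2.1 hwu)
  have hr_irr : ∀ x : V, ¬ (A x x ∧ ¬ A x x) := fun x h => hirr x h.1
  -- conversion between the two antichain notions on Sg
  have from_r : ∀ W : Finset V, ACr (fun u v : V => A u v ∧ ¬ A v u)
      (univ.filter (fun v => cls A v = {v})) W → ∀ u ∈ W, ∀ v ∈ W, ¬ A u v := by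
    intro W hW u hu v hv hAuv
    by_cases huv : u = v
    · exact hirr u (huv ▸ hAuv)
    · have hAvu : A v u := by
        by_contra hAvu
        exact hW.2 u hu v hv ⟨hAuv, hAvu⟩
      have hclseq : cls A u = cls A v := cls_eq_of_rel hirr htrans (Or.inr ⟨hAuv, hAvu⟩)
      have hu1 : cls A u = {u} := (hmemSg u).1 (hW.1 hu)
      have hv1 : cls A v = {v} := (hmemSg v).1 (hW.1 hv)
      rw [hu1, hv1] at hclseq
      exact huv (Finset.singleton_injective hclseq)
  -- from the obstruction: every antichain of singleton reps is small
  have hmaxA : ∀ W : Finset V, W ⊆ univ.filter (fun v => cls A v = {v}) →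
      (∀ u ∈ W, ∀ v ∈ W, ¬ A u v) →
      W.card + l + 1 ≤ (univ.image (cls A)).card := by
    intro W hWS hWI
    by_contra hcon
    push_neg at hcon
    refine hobs (build_colouring hirr htrans l W ?_ hWI ?_)
    · intro v hv
      exact (hmemSg v).1 (hWS hv)
    · omega
  have hlm : l + 1 ≤ (univ.image (cls A)).card := by
    have := hmaxA ∅ (empty_subset _) (by simp)
    simpa using this
  -- no class of size ≥ 3
  have hsize : ∀ K ∈ univ.image (cls A), K.card ≤ 2 := by
    intro K hK
    by_contra hbig
    push_neg at hbig
    obtain ⟨x, hxK⟩ := cls_nonempty_mem hK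
    have hKx : K = cls A x := cls_eq_of_mem hirr htrans hK hxK
    have hx2 : 2 ≤ (cls A x).card := by rw [← hKx]; omega
    obtain ⟨W, hWI, hxW, hWprop, hcard⟩ := extract_antichain hirr htrans l x (hmin x)
    rw [Cx_big_case hirr htrans hx2] at hcard
    have hWSg : W ⊆ univ.filter (fun v => cls A v = {v}) := by
      intro v hv
      obtain ⟨hvx, hvcls⟩ := hWprop v hv
      by_cases hxv : x ∈ cls A v
      · have hce : (cls A v).erase x = {v} := hvcls
        have h5 : ((cls A v).erase x).card = (cls A v).card - 1 :=
          Finset.card_erase_of_mem hxv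
        rw [hce, Finset.card_singleton] at h5
        have h6 : (cls A v).card = (cls A x).card := by
          rw [cls_eq_of_rel hirr htrans (rel_of_mem_cls hxv)]
        have h7 : K.card = (cls A x).card := by rw [hKx]
        exfalso
        omega
      · rw [Finset.erase_eq_of_notMem hxv] at hvcls
        exact (hmemSg v).2 hvcls
    have := hmaxA W hWSg hWI
    omega
  have hcount := counting hirr htrans hsize
  rcases Finset.eq_empty_or_nonempty (univ.filter (fun v : V => cls A v = {v}))
    with hSge | ⟨x0, hx0⟩
  · -- no singleton classes
    have hCne : (univ.image (cls A)).Nonempty := Finset.card_pos.1 (by omega)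
    obtain ⟨K, hK⟩ := hCne
    obtain ⟨x, hxK⟩ := cls_nonempty_mem hK
    have hx2 : 2 ≤ (cls A x).card := by
      have h1 : 1 ≤ (cls A x).card := Finset.card_pos.2 ⟨x, self_mem_cls x⟩
      rcases Nat.lt_or_ge (cls A x).card 2 with h | h
      · exfalso
        have hc1 : (cls A x).card = 1 := by omega
        obtain ⟨v, hv⟩ := Finset.card_eq_one.1 hc1
        have hxv : x ∈ ({v} : Finset V) := hv ▸ self_mem_cls x
        rw [Finset.mem_singleton] at hxv
        subst hxv
        have hmem : x ∈ univ.filter (fun v : V => cls A v = {v}) := (hmemSg x).2 hv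
        rw [hSge] at hmem
        exact absurd hmem (Finset.notMem_empty x)
      · exact h
    obtain ⟨W, hWI, hxW, hWprop, hcard⟩ := extract_antichain hirr htrans l x (hmin x)
    rw [Cx_big_case hirr htrans hx2] at hcard
    have hWsub : W ⊆ (cls A x).erase x := by
      intro v hv
      obtain ⟨hvx, hvcls⟩ := hWprop v hv
      by_cases hxv : x ∈ cls A v
      · have hcc : cls A x = cls A v := cls_eq_of_rel hirr htrans (rel_of_mem_cls hxv)
        rw [hcc, hvcls]
        exact Finset.mem_singleton_self v
      · rw [Finset.erase_eq_of_notMem hxv] at hvcls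
        have hmem : v ∈ univ.filter (fun v : V => cls A v = {v}) := (hmemSg v).2 hvcls
        rw [hSge] at hmem
        exact absurd hmem (Finset.notMem_empty v)
    have hW1 : W.card ≤ 1 := by
      have h3 := hsize (cls A x) (mem_image_of_mem _ (mem_univ x))
      calc W.card ≤ ((cls A x).erase x).card := Finset.card_le_card hWsub
        _ = (cls A x).card - 1 := Finset.card_erase_of_mem (self_mem_cls x)
        _ ≤ 1 := by omega
    have hSge0 : (univ.filter (fun v : V => cls A v = {v})).card = 0 := by
      rw [hSge]; simp
    omega
  · -- there is a singleton class
    have havoid : ∀ x ∈ univ.filter (fun v : V => cls A v = {v}),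
        ∃ W : Finset V, W ⊆ univ.filter (fun v : V => cls A v = {v}) ∧
        (∀ u ∈ W, ∀ v ∈ W, ¬ A u v) ∧
        W.card = (univ.image (cls A)).card - (l + 1) ∧ x ∉ W := by
      intro x hx
      have hclsx : cls A x = {x} := (hmemSg x).1 hx
      obtain ⟨W, hWI, hxW, hWprop, hcard⟩ := extract_antichain hirr htrans l x (hmin x)
      rw [Cx_singleton_case hirr htrans hclsx] at hcard
      have hxC : ({x} : Finset V) ∈ univ.image (cls A) := by
        rw [mem_image]
        exact ⟨x, mem_univ x, hclsx⟩
      rw [Finset.card_erase_of_mem hxC] at hcard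
      have hWSg : W ⊆ univ.filter (fun v : V => cls A v = {v}) := by
        intro v hv
        obtain ⟨hvx, hvcls⟩ := hWprop v hv
        by_cases hxv : x ∈ cls A v
        · exfalso
          have hcc : cls A x = cls A v := cls_eq_of_rel hirr htrans (rel_of_mem_cls hxv)
          have hvmem : v ∈ cls A x := hcc ▸ self_mem_cls v
          rw [hclsx, Finset.mem_singleton] at hvmem
          exact hvx hvmem
        · rw [Finset.erase_eq_of_notMem hxv] at hvcls
          exact (hmemSg v).2 hvcls
      have hnW : (univ.image (cls A)).card - (l + 1) ≤ W.card := by omega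
      obtain ⟨W', hW'sub, hW'card⟩ := Finset.exists_subset_card_eq hnW
      refine ⟨W', hW'sub.trans hWSg, ?_, hW'card, fun hxW' => hxW (hW'sub hxW')⟩
      intro u hu v hv
      exact hWI u (hW'sub hu) v (hW'sub hv)
    have hkey : 2 * ((univ.image (cls A)).card - (l + 1))
        ≤ (univ.filter (fun v : V => cls A v = {v})).card := by
      apply key_disjoint_antichains hr_trans hr_irr
      · intro W hW
        have := hmaxA W hW.1 (from_r W hW)
        omega
      · intro x hx
        obtain ⟨W, h1, h2, h3, h4⟩ := havoid x hx
        exact ⟨W, ⟨h1, fun u hu v hv hruv => h2 u hu v hv hruv.1⟩, h3, h4⟩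
      · obtain ⟨W, h1, h2, h3, h4⟩ := havoid x0 hx0
        exact ⟨W, ⟨h1, fun u hu v hv hruv => h2 u hu v hv hruv.1⟩, h3⟩
    omega
end

section
/- Let H be a semi-complete transitive digraph on m vertices. A transitive digraph G admits a homomorphism to H if and only if every semi-complete induced subgraph of G admits a homomorphism to H. -/
open Set

section Aux

universe u1 u2

variable {VG : Type u1}

/-- Auxiliary strict-ish order: linearize each strong component of `A` by `ι`. -/
def stmt17ple (A : VG → VG → Prop) (ι : VG → ℕ) (s w : VG) : Prop :=
  s = w ∨ (A s w ∧ (¬ A w s ∨ ι s < ι w))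

theorem stmt17ple_refl (A : VG → VG → Prop) (ι : VG → ℕ) (w : VG) : stmt17ple A ι w w :=
  Or.inl rfl

theorem stmt17ple_A {A : VG → VG → Prop} {ι : VG → ℕ} {s w : VG}
    (h : stmt17ple A ι s w) (hne : s ≠ w) : A s w := by
  rcases h with rfl | ⟨h, -⟩
  · exact absurd rfl hne
  · exact h

theorem stmt17_Ane {A : VG → VG → Prop} (hirr : ∀ v, ¬ A v v) {a b : VG} (h : A a b) :
    a ≠ b := fun hab => hirr b (hab ▸ h)

theorem stmt17ple_trans {A : VG → VG → Prop} {ι : VG → ℕ}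
    (hirr : ∀ v, ¬ A v v)
    (htrans : ∀ u v w : VG, u ≠ v → v ≠ w → u ≠ w → A u v → A v w → A u w)
    {a b c : VG} (h1 : stmt17ple A ι a b) (h2 : stmt17ple A ι b c) : stmt17ple A ι a c := by
  rcases h1 with rfl | ⟨hab, h1'⟩
  · exact h2
  rcases h2 with rfl | ⟨hbc, h2'⟩
  · exact Or.inr ⟨hab, h1'⟩
  by_cases hac : a = c
  · exact Or.inl hac
  have hne_ab : a ≠ b := stmt17_Ane hirr hab
  have hne_bc : b ≠ c := stmt17_Ane hirr hbc
  have hAac : A a c := htrans a b c hne_ab hne_bc hac hab hbc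
  refine Or.inr ⟨hAac, ?_⟩
  by_cases hca : A c a
  · have hAcb : A c b := htrans c a b (Ne.symm hac) hne_ab (Ne.symm hne_bc) hca hab
    have hbc' : ι b < ι c := h2'.resolve_left (not_not_intro hAcb)
    have hAba : A b a := htrans b c a hne_bc (Ne.symm hac) (Ne.symm hne_ab) hbc hca
    have hab' : ι a < ι b := h1'.resolve_left (not_not_intro hAba)
    exact Or.inr (hab'.trans hbc')
  · exact Or.inl hca

theorem stmt17ple_antisymm {A : VG → VG → Prop} {ι : VG → ℕ} {a b : VG}
    (h1 : stmt17ple A ι a b) (h2 : stmt17ple A ι b a) : a = b := by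
  rcases h1 with rfl | ⟨hab, h1'⟩
  · rfl
  rcases h2 with rfl | ⟨hba, h2'⟩
  · rfl
  have := h1'.resolve_left (not_not_intro hba)
  have := h2'.resolve_left (not_not_intro hab)
  omega

theorem stmt17ple_total {A : VG → VG → Prop} {ι : VG → ℕ} (hιinj : Function.Injective ι)
    {a b : VG} (hne : a ≠ b) (hj : A a b ∨ A b a) :
    stmt17ple A ι a b ∨ stmt17ple A ι b a := by
  have hιne : ι a ≠ ι b := fun h => hne (hιinj h)
  rcases hj with h | h
  · by_cases h' : A b a
    · rcases lt_or_gt_of_ne hιne with hl | hl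
      · exact Or.inl (Or.inr ⟨h, Or.inr hl⟩)
      · exact Or.inr (Or.inr ⟨h', Or.inr hl⟩)
    · exact Or.inl (Or.inr ⟨h, Or.inl h'⟩)
  · by_cases h' : A a b
    · rcases lt_or_gt_of_ne hιne with hl | hl
      · exact Or.inl (Or.inr ⟨h', Or.inr hl⟩)
      · exact Or.inr (Or.inr ⟨h, Or.inr hl⟩)
    · exact Or.inr (Or.inr ⟨h, Or.inl h'⟩)

/-- Core packing lemma: by induction on the size of the target. -/
theorem stmt17core : ∀ (n : ℕ) {VG : Type u1} {VH : Type u2} [Fintype VG] [Fintype VH],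
    Fintype.card VH ≤ n → ∀ (cls : VH → ℕ) (A : VG → VG → Prop),
    (∀ v, ¬ A v v) →
    (∀ u v w : VG, u ≠ v → v ≠ w → u ≠ w → A u v → A v w → A u w) →
    (∀ S : Set VG, (∀ u ∈ S, ∀ v ∈ S, u ≠ v → A u v ∨ A v u) →
      ∃ f : VG → VH, ∀ u ∈ S, ∀ v ∈ S, A u v → f u ≠ f v ∧ cls (f u) ≤ cls (f v)) →
    ∃ f : VG → VH, ∀ u v : VG, A u v → f u ≠ f v ∧ cls (f u) ≤ cls (f v) := by
  intro n
  induction n with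
  | zero =>
    intro VG VH _ _ hcard cls A hirr htrans hyp
    obtain ⟨f, -⟩ := hyp ∅ (by simp)
    have hE : IsEmpty VH := Fintype.card_eq_zero_iff.mp (Nat.le_zero.mp hcard)
    exact ⟨f, fun u v _ => (hE.false (f u)).elim⟩
  | succ n IH =>
    intro VG VH _ _ hcard cls A hirr htrans hyp
    classical
    rcases isEmpty_or_nonempty VH with hE | hNE
    · obtain ⟨f, -⟩ := hyp ∅ (by simp)
      exact ⟨f, fun u v _ => (hE.false (f u)).elim⟩
    -- minimum class value c1
    obtain ⟨x0, -, hx0⟩ :=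
      Finset.exists_min_image Finset.univ cls ⟨Classical.arbitrary VH, Finset.mem_univ _⟩
    set c1 := cls x0 with hc1def
    have hc1le : ∀ x, c1 ≤ cls x := fun x => hx0 x (Finset.mem_univ x)
    set C1 : Set VH := {x | cls x = c1} with hC1def
    set n1 := C1.ncard with hn1def
    have hx0C1 : x0 ∈ C1 := rfl
    have hn1pos : 0 < n1 := (Set.ncard_pos (toFinite _)).2 ⟨x0, hx0C1⟩
    -- linearization of components
    set ι : VG → ℕ := fun w => ((Fintype.equivFin VG) w : ℕ) with hιdef
    have hιinj : Function.Injective ι := fun a b h =>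
      (Fintype.equivFin VG).injective (Fin.ext h)
    have hAne : ∀ {a b : VG}, A a b → a ≠ b := fun {a b} h => stmt17_Ane hirr h
    set P := stmt17ple A ι with hPdef
    have ptrans : ∀ {a b c : VG}, P a b → P b c → P a c :=
      fun h1 h2 => stmt17ple_trans hirr htrans h1 h2
    -- the set U of vertices all of whose in-chains fit in the first class
    set U : Set VG := {w | ∀ S : Set VG,
        (∀ a ∈ S, ∀ b ∈ S, a ≠ b → A a b ∨ A b a) → w ∈ S →
        (∀ s ∈ S, s = w ∨ A s w) → S.ncard ≤ n1} with hUdef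
    -- colors
    set colorSet : VG → Set ℕ := fun w => {k : ℕ | ∃ S : Set VG,
        (∀ a ∈ S, ∀ b ∈ S, a ≠ b → A a b ∨ A b a) ∧ w ∈ S ∧ (∀ s ∈ S, P s w) ∧ S.ncard = k}
      with hcolorSetdef
    set color : VG → ℕ := fun w => sSup (colorSet w) with hcolordef
    have hbdd : ∀ w, BddAbove (colorSet w) := by
      intro w
      refine ⟨Fintype.card VG, ?_⟩
      rintro k ⟨S, -, -, -, rfl⟩
      calc S.ncard ≤ (Set.univ : Set VG).ncard := Set.ncard_le_ncard (subset_univ S) (toFinite _)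
        _ = Fintype.card VG := by rw [Set.ncard_univ, Nat.card_eq_fintype_card]
    have hmem1 : ∀ w, 1 ∈ colorSet w := by
      intro w
      refine ⟨{w}, ?_, rfl, ?_, Set.ncard_singleton w⟩
      · intro a ha b hb hne
        rw [Set.mem_singleton_iff] at ha hb
        exact absurd (ha.trans hb.symm) hne
      · intro s hs
        rw [Set.mem_singleton_iff] at hs
        exact Or.inl hs
    have hcol_mem : ∀ w, color w ∈ colorSet w := fun w => Nat.sSup_mem ⟨1, hmem1 w⟩ (hbdd w)
    have hcol1 : ∀ w, 1 ≤ color w := fun w => le_csSup (hbdd w) (hmem1 w)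
    have hcol_leU : ∀ w ∈ U, color w ≤ n1 := by
      intro w hw
      refine csSup_le ⟨1, hmem1 w⟩ ?_
      rintro k ⟨S, hsem, hwS, hps, rfl⟩
      exact hw S hsem hwS (fun s hs => (hps s hs).imp id And.left)
    have hcol_lt : ∀ a b : VG, a ≠ b → P a b → color a + 1 ≤ color b := by
      intro a b hne hab
      obtain ⟨S, hsem, haS, hps, hcard'⟩ := hcol_mem a
      have hbS : b ∉ S := fun hbS => hne (stmt17ple_antisymm hab (hps b hbS))
      have hplesb : ∀ s ∈ S, P s b := fun s hs => ptrans (hps s hs) hab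
      refine le_csSup (hbdd b) ⟨insert b S, ?_, Set.mem_insert _ _, ?_, ?_⟩
      · intro x hx y hy hxy
        rw [Set.mem_insert_iff] at hx hy
        rcases hx with rfl | hx
        · rcases hy with rfl | hy
          · exact absurd rfl hxy
          · exact Or.inr (stmt17ple_A (hplesb y hy) (Ne.symm hxy))
        · rcases hy with rfl | hy
          · exact Or.inl (stmt17ple_A (hplesb x hx) hxy)
          · exact hsem x hx y hy hxy
      · intro s hs
        rw [Set.mem_insert_iff] at hs
        rcases hs with rfl | hs
        · exact stmt17ple_refl A ι s
        · exact hplesb s hs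
      · rw [Set.ncard_insert_of_notMem hbS (toFinite S), hcard']
    -- U is downward closed
    have hUdc : ∀ a b : VG, A a b → b ∈ U → a ∈ U := by
      intro a b hA hb S hsem haS hR
      have hab : a ≠ b := hAne hA
      have hsAb : ∀ s ∈ S, s ≠ b → A s b := by
        intro s hs hsb
        rcases hR s hs with rfl | h
        · exact hA
        · exact htrans s a b (hAne h) hab hsb h hA
      by_cases hbS : b ∈ S
      · refine hb S hsem hbS ?_
        intro s hs
        by_cases h : s = b
        · exact Or.inl h
        · exact Or.inr (hsAb s hs h)
      · have hTle := hb (insert b S) ?_ (Set.mem_insert _ _) ?_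
        · calc S.ncard ≤ (insert b S).ncard :=
                Set.ncard_le_ncard (Set.subset_insert _ _) (toFinite _)
            _ ≤ n1 := hTle
        · intro x hx y hy hxy
          rw [Set.mem_insert_iff] at hx hy
          rcases hx with rfl | hx
          · rcases hy with rfl | hy
            · exact absurd rfl hxy
            · exact Or.inr (hsAb y hy (fun h => hbS (h ▸ hy)))
          · rcases hy with rfl | hy
            · exact Or.inl (hsAb x hx (fun h => hbS (h ▸ hx)))
            · exact hsem x hx y hy hxy
        · intro s hs
          rw [Set.mem_insert_iff] at hs
          rcases hs with rfl | hs
          · exact Or.inl rfl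
          · exact Or.inr (hsAb s hs (fun h => hbS (h ▸ hs)))
    -- embedding of colors into C1
    have hC1card : Fintype.card C1 = n1 := by
      rw [hn1def, Set.ncard_eq_toFinset_card', Set.toFinset_card]
    set e1 := Fintype.equivFinOfCardEq hC1card with he1def
    set fU : VG → VH := fun w =>
      (e1.symm ⟨(color w - 1) % n1, Nat.mod_lt _ hn1pos⟩ : C1).val with hfUdef
    have hfUc1 : ∀ w, cls (fU w) = c1 := fun w => (e1.symm _).property
    have hfUinjU : ∀ a b : VG, a ∈ U → b ∈ U → color a ≠ color b → fU a ≠ fU b := by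
      intro a b ha hb hne heq
      have h1 : (color a - 1) % n1 = color a - 1 :=
        Nat.mod_eq_of_lt (by have := hcol_leU a ha; have := hcol1 a; omega)
      have h2 : (color b - 1) % n1 = color b - 1 :=
        Nat.mod_eq_of_lt (by have := hcol_leU b hb; have := hcol1 b; omega)
      have h3 := e1.symm.injective (Subtype.coe_injective heq)
      rw [Fin.mk.injEq, h1, h2] at h3
      have := hcol1 a; have := hcol1 b
      omega
    -- helper: arcs from a chain below v0 to anything above v0
    have hchain_arc : ∀ {S1 : Set VG} {v0 t s : VG}, (∀ s ∈ S1, s = v0 ∨ A s v0) →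
        P v0 t → s ∈ S1 → s ≠ t → A s t := by
      intro S1 v0 t s hR hvt hs hst
      rcases hR s hs with rfl | h
      · exact stmt17ple_A hvt hst
      · by_cases hv0t : v0 = t
        · exact hv0t ▸ h
        · have hA2 : A v0 t := stmt17ple_A hvt hv0t
          by_cases hsv : s = v0
          · exact hsv ▸ hA2
          · exact htrans s v0 t hsv hv0t hst h hA2
    -- pigeonhole
    have hpigeon : ∀ (S1 : Set VG) (g : VG → VH),
        (∀ a ∈ S1, ∀ b ∈ S1, a ≠ b → A a b ∨ A b a) →
        (∀ a ∈ S1, ∀ b ∈ S1, A a b → g a ≠ g b ∧ cls (g a) ≤ cls (g b)) →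
        (∀ a ∈ S1, cls (g a) = c1) → S1.ncard ≤ n1 := by
      intro S1 g hsem hg hc
      refine Set.ncard_le_ncard_of_injOn g (fun a ha => hc a ha) ?_ (toFinite C1)
      intro a ha b hb heq
      by_contra hne
      rcases hsem a ha b hb hne with h | h
      · exact (hg a ha b hb h).1 heq
      · exact (hg b hb a ha h).1 heq.symm
    by_cases hUall : ∀ w, w ∈ U
    · refine ⟨fU, fun a b hA => ?_⟩
      have hne := hAne hA
      have hcne : color a ≠ color b := by
        rcases stmt17ple_total hιinj hne (Or.inl hA) with h | h
        · have := hcol_lt a b hne h; omega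
        · have := hcol_lt b a (Ne.symm hne) h; omega
      exact ⟨hfUinjU a b (hUall a) (hUall b) hcne, le_of_eq (by rw [hfUc1, hfUc1])⟩
    · push_neg at hUall
      obtain ⟨w0, hw0⟩ := hUall
      have hWex : ∀ w, w ∉ U → ∃ S : Set VG,
          (∀ a ∈ S, ∀ b ∈ S, a ≠ b → A a b ∨ A b a) ∧ w ∈ S ∧
          (∀ s ∈ S, s = w ∨ A s w) ∧ n1 < S.ncard := by
        intro w hw
        rw [hUdef, Set.mem_setOf_eq] at hw
        push_neg at hw
        obtain ⟨S, h1, h2, h3, h4⟩ := hw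
        exact ⟨S, h1, h2, h3, h4⟩
      obtain ⟨S0, hS0sem, hw0S0, hS0R, hS0card⟩ := hWex w0 hw0
      obtain ⟨g0, hg0⟩ := hyp S0 hS0sem
      have hx' : ∃ x : VH, cls x ≠ c1 := by
        by_contra h
        push_neg at h
        have := hpigeon S0 g0 hS0sem (fun a ha b hb hA => hg0 a ha b hb hA)
          (fun a _ => h (g0 a))
        omega
      obtain ⟨x0', hx0'⟩ := hx'
      have hcard' : Fintype.card {x : VH // cls x ≠ c1} ≤ n := by
        have h1 : Fintype.card {x : VH // cls x ≠ c1} < Fintype.card VH :=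
          Fintype.card_subtype_lt (x := x0) (not_not_intro hx0C1)
        omega
      set A' : {w : VG // w ∉ U} → {w : VG // w ∉ U} → Prop :=
        fun a b => A a.val b.val with hA'def
      have hirr' : ∀ w, ¬ A' w w := fun w => hirr w.val
      have htrans' : ∀ a b c, a ≠ b → b ≠ c → a ≠ c → A' a b → A' b c → A' a c := by
        intro a b c h1 h2 h3 h4 h5
        exact htrans a.val b.val c.val (fun h => h1 (Subtype.ext h))
          (fun h => h2 (Subtype.ext h)) (fun h => h3 (Subtype.ext h)) h4 h5
      have hyp' : ∀ S' : Set {w : VG // w ∉ U},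
          (∀ u ∈ S', ∀ v ∈ S', u ≠ v → A' u v ∨ A' v u) →
          ∃ f' : {w : VG // w ∉ U} → {x : VH // cls x ≠ c1},
            ∀ u ∈ S', ∀ v ∈ S', A' u v →
              f' u ≠ f' v ∧ (fun x : {x : VH // cls x ≠ c1} => cls x.val) (f' u) ≤
                (fun x : {x : VH // cls x ≠ c1} => cls x.val) (f' v) := by
        intro S' hS'
        rcases S'.eq_empty_or_nonempty with rfl | hS'ne
        · exact ⟨fun _ => ⟨x0', hx0'⟩, by simp⟩
        set T'' : Set VG := Subtype.val '' S' with hT''def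
        have hT''ne : T''.Nonempty := hS'ne.image _
        have hT''sem : ∀ a ∈ T'', ∀ b ∈ T'', a ≠ b → A a b ∨ A b a := by
          rintro a ⟨a', ha', rfl⟩ b ⟨b', hb', rfl⟩ hne
          exact hS' a' ha' b' hb' (fun h => hne (congrArg Subtype.val h))
        obtain ⟨v0, hv0T, hv0min⟩ := Set.exists_min_image T''
          (fun t => {s ∈ T'' | P s t}.ncard) (toFinite _) hT''ne
        have hv0le : ∀ t ∈ T'', P v0 t := by
          intro t ht
          by_cases htv : t = v0
          · rw [htv]; exact stmt17ple_refl A ι v0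
          rcases stmt17ple_total hιinj (fun h : v0 = t => htv h.symm)
              (hT''sem v0 hv0T t ht (fun h => htv h.symm)) with h | h
          · exact h
          · by_contra hvt
            have hss : {s ∈ T'' | P s t} ⊂ {s ∈ T'' | P s v0} := by
              constructor
              · rintro s ⟨hs1, hs2⟩
                exact ⟨hs1, ptrans hs2 h⟩
              · intro hsub2
                exact hvt (hsub2 ⟨hv0T, stmt17ple_refl A ι v0⟩).2
            have := Set.ncard_lt_ncard hss (toFinite _)
            have h2 := hv0min t ht
            omega
        have hv0G : v0 ∉ U := by
          obtain ⟨v0', -, rfl⟩ := hv0T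
          exact v0'.property
        obtain ⟨S1, hS1sem, hv0S1, hS1R, hS1card⟩ := hWex v0 hv0G
        have hTsem : ∀ a ∈ S1 ∪ T'', ∀ b ∈ S1 ∪ T'', a ≠ b → A a b ∨ A b a := by
          rintro a ha b hb hne
          rcases ha with ha | ha <;> rcases hb with hb | hb
          · exact hS1sem a ha b hb hne
          · exact Or.inl (hchain_arc hS1R (hv0le b hb) ha hne)
          · exact Or.inr (hchain_arc hS1R (hv0le a ha) hb (Ne.symm hne))
          · exact hT''sem a ha b hb hne
        obtain ⟨g, hg⟩ := hyp (S1 ∪ T'') hTsem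
        have hgT'' : ∀ t ∈ T'', cls (g t) ≠ c1 := by
          intro t ht hc
          have hall : ∀ s ∈ S1, cls (g s) = c1 := by
            intro s hs
            by_cases hst : s = t
            · exact hst ▸ hc
            · have hAst : A s t := hchain_arc hS1R (hv0le t ht) hs hst
              have h1 := (hg s (Or.inl hs) t (Or.inr ht) hAst).2
              have h2 := hc1le (g s)
              omega
          have := hpigeon S1 g hS1sem
            (fun a ha b hb hA => hg a (Or.inl ha) b (Or.inl hb) hA) hall
          omega
        refine ⟨fun w => if hw : w ∈ S' then ⟨g w.val, hgT'' w.val ⟨w, hw, rfl⟩⟩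
          else ⟨x0', hx0'⟩, ?_⟩
        intro a ha b hb hA
        simp only [dif_pos ha, dif_pos hb]
        have h := hg a.val (Or.inr ⟨a, ha, rfl⟩) b.val (Or.inr ⟨b, hb, rfl⟩) hA
        exact ⟨fun hh => h.1 (congrArg Subtype.val hh), h.2⟩
      obtain ⟨f'', hf''⟩ := IH hcard' (fun x : {x : VH // cls x ≠ c1} => cls x.val)
        A' hirr' htrans' hyp'
      refine ⟨fun w => if hw : w ∈ U then fU w else (f'' ⟨w, hw⟩).val, ?_⟩
      intro a b hA
      have hne := hAne hA
      by_cases ha : a ∈ U <;> by_cases hb : b ∈ U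
      · simp only [dif_pos ha, dif_pos hb]
        have hcne : color a ≠ color b := by
          rcases stmt17ple_total hιinj hne (Or.inl hA) with h | h
          · have := hcol_lt a b hne h; omega
          · have := hcol_lt b a (Ne.symm hne) h; omega
        exact ⟨hfUinjU a b ha hb hcne, le_of_eq (by rw [hfUc1, hfUc1])⟩
      · simp only [dif_pos ha, dif_neg hb]
        refine ⟨fun h => (f'' ⟨b, hb⟩).property (by rw [← h, hfUc1]), ?_⟩
        rw [hfUc1]
        exact hc1le _
      · exact absurd (hUdc a b hA hb) ha
      · simp only [dif_neg ha, dif_neg hb]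
        have h := hf'' ⟨a, ha⟩ ⟨b, hb⟩ hA
        exact ⟨fun hh => h.1 (Subtype.ext hh), h.2⟩

end Aux

theorem stmt_17 {VH VG : Type*} [Fintype VH] [Fintype VG]
    (B : VH → VH → Prop)
    (hirrH : ∀ v, ¬ B v v)
    (htransH : ∀ u v w : VH, u ≠ v → v ≠ w → u ≠ w → B u v → B v w → B u w)
    (hsemiH : ∀ u v : VH, u ≠ v → B u v ∨ B v u)
    (A : VG → VG → Prop)
    (hirrG : ∀ v, ¬ A v v)
    (htransG : ∀ u v w : VG, u ≠ v → v ≠ w → u ≠ w → A u v → A v w → A u w) :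
    (∃ f : VG → VH, ∀ u v : VG, A u v → B (f u) (f v)) ↔
      ∀ S : Set VG, (∀ u ∈ S, ∀ v ∈ S, u ≠ v → A u v ∨ A v u) →
        ∃ f : VG → VH, ∀ u ∈ S, ∀ v ∈ S, A u v → B (f u) (f v) := by
  constructor
  · rintro ⟨f, hf⟩ S _
    exact ⟨f, fun u _ v _ hA => hf u v hA⟩
  · intro hyp
    classical
    set cls : VH → ℕ := fun x => {y | B y x ∧ ¬ B x y}.ncard with hclsdef
    have hsub : ∀ {x y : VH}, B x y → {z | B z x ∧ ¬ B x z} ⊆ {z | B z y ∧ ¬ B y z} := by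
      intro x y hxy z hz
      obtain ⟨h1, h2⟩ := hz
      have hzx : z ≠ x := fun h => hirrH x (h ▸ h1)
      have hzy : z ≠ y := fun h => h2 (h ▸ hxy)
      have hxy' : x ≠ y := fun h => hirrH y (h ▸ hxy)
      refine ⟨htransH z x y hzx hxy' hzy h1 hxy, fun hyz => ?_⟩
      exact h2 (htransH x y z hxy' (Ne.symm hzy) (Ne.symm hzx) hxy hyz)
    have hkey : ∀ x y : VH, B x y ↔ x ≠ y ∧ cls x ≤ cls y := by
      intro x y
      constructor
      · intro h
        exact ⟨fun he => hirrH y (he ▸ h), Set.ncard_le_ncard (hsub h) (toFinite _)⟩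
      · rintro ⟨hne, hle⟩
        by_contra hB
        have hyx : B y x := (hsemiH x y hne).resolve_left hB
        have hss : {z | B z y ∧ ¬ B y z} ⊂ {z | B z x ∧ ¬ B x z} := by
          refine ⟨hsub hyx, fun hsub2 => ?_⟩
          exact hirrH y (hsub2 (⟨hyx, hB⟩ : y ∈ {z | B z x ∧ ¬ B x z})).1
        have := Set.ncard_lt_ncard hss (toFinite _)
        simp only [hclsdef] at hle
        omega
    obtain ⟨f, hf⟩ := stmt17core (Fintype.card VH) le_rfl cls A hirrG htransG
      (fun S hS => by
        obtain ⟨f, hf⟩ := hyp S hS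
        exact ⟨f, fun u hu v hv hA => (hkey _ _).1 (hf u hu v hv hA)⟩)
    exact ⟨f, fun u v hA => (hkey _ _).2 (hf u v hA)⟩
end
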